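/- arXiv:2302.00643 — 11 statements merged into one kernel-verified Lean document; each statement's English description precedes it below -/
import Mathlib

section
/- Let n ≥ 1, k ≥ 1, and let A_1, …, A_k be real symmetric n×n matrices. There exist real numbers c_1, …, c_k such that the linear combination Σ_{i=1}^k c_i·A_i is a nonzero positive semidefinite matrix if and only if there is no X ∈ 𝒫(n) satisfying tr(A_i·X) = 0 for all i = 1, …, k (i.e. the intersection A_1^⊥ ∩ ⋯ ∩ A_k^⊥ in 𝒫(n) is empty). -/
/-!
If `B = ∑ cᵢ Aᵢ` is positive semidefinite and `X` is positive definite with `tr (Aᵢ X) = 0`,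
write `B = Rᴴ R` and `X = Sᴴ S` with `S` invertible: then `0 = tr (B X) = ‖R Sᴴ‖²` (Frobenius),
so `B = 0`.

Conversely, if the span `V` of the `Aᵢ` contains no nonzero positive semidefinite matrix, then
`V` is disjoint from the compact convex set of positive semidefinite matrices of trace one, and
Hahn–Banach gives a linear functional vanishing on `V` and positive on that set. Written as
`M ↦ tr (M X)` with `X` symmetric, its positivity on the rank-one matrices `w wᵀ` says that `X`
is positive definite, and a positive multiple of `X` has determinant one.
-/

open Matrix

theorem Submodule.exists_strongDual_eq_zero_and_pos_of_disjoint {E : Type*} [TopologicalSpace E]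
    [AddCommGroup E] [IsTopologicalAddGroup E] [Module ℝ E] [ContinuousSMul ℝ E]
    [LocallyConvexSpace ℝ E] (V : Submodule ℝ E) (hV : IsClosed (V : Set E)) {K : Set E}
    (hKc : Convex ℝ K) (hK : IsCompact K) (hVK : Disjoint (V : Set E) K) :
    ∃ f : StrongDual ℝ E, (∀ x ∈ V, f x = 0) ∧ ∀ x ∈ K, 0 < f x := by
  obtain ⟨f, u, v, hfV, huv, hfK⟩ := geometric_hahn_banach_closed_compact V.convex hV hKc hK hVK
  have hu : 0 < u := by simpa using hfV 0 V.zero_mem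
  refine ⟨f, fun x hx => ?_, fun x hx => by linarith [hfK x hx]⟩
  by_contra hfx
  have := hfV ((u / f x) • x) (V.smul_mem _ hx)
  rw [map_smul, smul_eq_mul, div_mul_cancel₀ _ hfx] at this
  exact this.false

namespace Matrix
variable {ι : Type*} [Fintype ι]

open scoped ComplexOrder MatrixOrder in
theorem PosSemidef.eq_zero_of_trace_mul_posDef_eq_zero {𝕜 : Type*} [RCLike 𝕜]
    {B X : Matrix ι ι 𝕜} (hB : B.PosSemidef) (hX : X.PosDef) (h : (B * X).trace = 0) :
    B = 0 := by
  classical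
  obtain ⟨R, rfl⟩ := CStarAlgebra.nonneg_iff_eq_star_mul_self.mp hB.nonneg
  obtain ⟨S, hS, rfl⟩ := CStarAlgebra.isStrictlyPositive_iff_eq_star_mul_self.mp
    hX.isStrictlyPositive
  have hRS : R * star S = 0 := by
    rw [← trace_mul_conjTranspose_self_eq_zero_iff, ← h]
    simp only [conjTranspose_mul, conjTranspose_conjTranspose, star_eq_conjTranspose,
      ← Matrix.mul_assoc]
    rw [trace_mul_cycle, ← Matrix.mul_assoc]
  simp [hS.star.mul_left_eq_zero.mp hRS]

open scoped ComplexOrder in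
theorem PosSemidef.trace_pos {𝕜 : Type*} [RCLike 𝕜] {M : Matrix ι ι 𝕜} (hM : M.PosSemidef)
    (hM0 : M ≠ 0) : 0 < M.trace := by
  classical
  refine hM.trace_nonneg.lt_of_ne fun h => hM0 ?_
  exact hM.eq_zero_of_trace_mul_posDef_eq_zero PosDef.one (by rw [Matrix.mul_one, h])

theorem PosSemidef.two_mul_abs_apply_le {M : Matrix ι ι ℝ} (hM : M.PosSemidef) (i j : ι) :
    2 * |M i j| ≤ M i i + M j j := by
  classical
  have hs : M j i = M i j := by simpa using hM.isHermitian.apply i j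
  have hadd := hM.dotProduct_mulVec_nonneg (Pi.single i 1 + Pi.single j 1)
  have hsub := hM.dotProduct_mulVec_nonneg (Pi.single i 1 - Pi.single j 1)
  simp only [star_trivial, mulVec_add, mulVec_sub, mulVec_single, MulOpposite.op_one, one_smul,
    dotProduct_add, dotProduct_sub, add_dotProduct, sub_dotProduct, single_dotProduct, col_apply,
    one_mul, hs] at hadd hsub
  cases abs_cases (M i j) <;> linarith

theorem PosSemidef.abs_apply_le_trace {M : Matrix ι ι ℝ} (hM : M.PosSemidef) (i j : ι) :
    |M i j| ≤ M.trace := by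
  have hdiag : ∀ k, M k k ≤ M.trace := fun k =>
    Finset.single_le_sum (fun l _ => hM.diag_nonneg (i := l)) (Finset.mem_univ k)
  linarith [hM.two_mul_abs_apply_le i j, hdiag i, hdiag j]

theorem isClosed_setOf_posSemidef : IsClosed {M : Matrix ι ι ℝ | M.PosSemidef} := by
  simp only [posSemidef_iff_dotProduct_mulVec, Set.ofPred_and, Set.ofPred_forall]
  refine .inter (isClosed_eq (by fun_prop) continuous_id) (isClosed_iInter fun x => ?_)
  exact isClosed_le continuous_const (by fun_prop)

theorem convex_setOf_posSemidef_trace_eq_one :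
    Convex ℝ {M : Matrix ι ι ℝ | M.PosSemidef ∧ M.trace = 1} := by
  rintro M ⟨hM, hMtr⟩ N ⟨hN, hNtr⟩ a b ha hb hab
  exact ⟨(hM.smul ha).add (hN.smul hb), by simp [hMtr, hNtr, hab]⟩

theorem isCompact_setOf_posSemidef_trace_eq_one :
    IsCompact {M : Matrix ι ι ℝ | M.PosSemidef ∧ M.trace = 1} := by
  have hbox : {M : Matrix ι ι ℝ | M.PosSemidef ∧ M.trace = 1} ⊆
      Set.univ.pi fun _ => Set.univ.pi fun _ => Set.Icc (-1) 1 := by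
    rintro M ⟨hM, hMtr⟩ i - j -
    exact abs_le.mp (hMtr ▸ hM.abs_apply_le_trace i j)
  refine (isCompact_univ_pi fun _ => isCompact_univ_pi fun _ => isCompact_Icc).of_isClosed_subset
    ?_ hbox
  exact isClosed_setOf_posSemidef.inter (isClosed_eq (by fun_prop) continuous_const)

theorem exists_trace_mul_eq {R : Type*} [CommSemiring R] (g : Matrix ι ι R →ₗ[R] R) :
    ∃ C : Matrix ι ι R, ∀ M, g M = (M * C).trace := by
  classical
  refine ⟨of fun j i => g (single i j 1), fun M => ?_⟩
  have hsingle : ∀ i j, single i j (M i j) = M i j • single i j (1 : R) := by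
    simp [smul_single]
  conv_lhs => rw [matrix_eq_sum_single M]
  simp only [map_sum, hsingle, map_smul, smul_eq_mul, trace, diag_apply, mul_apply, of_apply]

theorem IsSymm.trace_mul_transpose {R : Type*} [CommSemiring R] {M : Matrix ι ι R}
    (hM : M.IsSymm) (C : Matrix ι ι R) : (M * Cᵀ).trace = (M * C).trace := by
  rw [← trace_transpose, transpose_mul, transpose_transpose, hM.eq, trace_mul_comm]

theorem trace_vecMulVec_self_mul {R : Type*} [CommSemiring R] (w : ι → R) (X : Matrix ι ι R) :
    (vecMulVec w w * X).trace = w ⬝ᵥ X *ᵥ w := by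
  rw [vecMulVec_mul, trace_vecMulVec, dotProduct_comm, dotProduct_mulVec]

theorem exists_pos_det_smul_eq_one [DecidableEq ι] {X : Matrix ι ι ℝ} (hX : 0 < X.det) :
    ∃ r : ℝ, 0 < r ∧ (r • X).det = 1 := by
  rcases isEmpty_or_nonempty ι with hι | hι
  · exact ⟨1, one_pos, by simp⟩
  · refine ⟨X.det ^ (-(Fintype.card ι : ℝ)⁻¹), by positivity, ?_⟩
    rw [det_smul, ← Real.rpow_natCast, ← Real.rpow_mul hX.le, neg_mul,
      inv_mul_cancel₀ (by positivity), Real.rpow_neg_one, inv_mul_cancel₀ hX.ne']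

theorem exists_posDef_forall_trace_mul_eq_zero (V : Submodule ℝ (Matrix ι ι ℝ))
    (hV : ∀ M ∈ V, M.IsSymm) (hVpos : ∀ M ∈ V, M.PosSemidef → M = 0) :
    ∃ X : Matrix ι ι ℝ, X.PosDef ∧ ∀ M ∈ V, (M * X).trace = 0 := by
  classical
  -- not found through the type synonym `Matrix ι ι ℝ = ι → ι → ℝ`
  have : LocallyConvexSpace ℝ (Matrix ι ι ℝ) :=
    inferInstanceAs (LocallyConvexSpace ℝ (ι → ι → ℝ))
  have hVK : Disjoint (V : Set (Matrix ι ι ℝ)) {M | M.PosSemidef ∧ M.trace = 1} :=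
    Set.disjoint_left.mpr fun M hMV ⟨hM, hMtr⟩ => by simp [hVpos M hMV hM] at hMtr
  obtain ⟨f, hfV, hfK⟩ := V.exists_strongDual_eq_zero_and_pos_of_disjoint
    V.closed_of_finiteDimensional convex_setOf_posSemidef_trace_eq_one
    isCompact_setOf_posSemidef_trace_eq_one hVK
  obtain ⟨C, hC⟩ := exists_trace_mul_eq (f : Matrix ι ι ℝ →ₗ[ℝ] ℝ)
  set X : Matrix ι ι ℝ := (2 : ℝ)⁻¹ • (C + Cᵀ)
  have hXsymm : X.IsSymm := by
    simp [X, IsSymm, transpose_add, add_comm]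
  have hfX : ∀ M : Matrix ι ι ℝ, M.IsSymm → f M = (M * X).trace := by
    intro M hM
    simp only [X, Matrix.mul_smul, Matrix.mul_add, trace_smul, trace_add,
      hM.trace_mul_transpose, ← hC, ContinuousLinearMap.coe_coe]
    ring
  have hfpos : ∀ M : Matrix ι ι ℝ, M.PosSemidef → M ≠ 0 → 0 < f M := by
    intro M hM hM0
    have htr := hM.trace_pos hM0
    have := hfK (M.trace⁻¹ • M) ⟨hM.smul (inv_nonneg.2 htr.le), by simp [htr.ne']⟩
    rw [map_smul, smul_eq_mul] at this
    exact pos_of_mul_pos_right this (inv_nonneg.2 htr.le)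
  refine ⟨X, posDef_iff_dotProduct_mulVec.mpr ⟨hXsymm, fun w hw => ?_⟩,
    fun M hM => by rw [← hfX M (hV M hM), hfV M hM]⟩
  have hw' := hfpos (vecMulVec w w) (by simpa using posSemidef_vecMulVec_self_star w)
    (vecMulVec_ne_zero hw hw)
  rwa [hfX _ (by simp [IsSymm, transpose_vecMulVec]), trace_vecMulVec_self_mul] at hw'

end Matrix

theorem semidefinite_combination_iff_empty_intersection_general
    (n k : ℕ)
    (A : Fin k → Matrix (Fin n) (Fin n) ℝ) (hA : ∀ i, (A i).IsSymm) :
    (∃ c : Fin k → ℝ, (∑ i, c i • A i) ≠ 0 ∧ (∑ i, c i • A i).PosSemidef) ↔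
      ¬∃ X : Matrix (Fin n) (Fin n) ℝ,
        X.PosDef ∧ X.det = 1 ∧ ∀ i, (A i * X).trace = 0 := by
  constructor
  · rintro ⟨c, hc0, hc⟩ ⟨X, hX, -, hAX⟩
    exact hc0 (hc.eq_zero_of_trace_mul_posDef_eq_zero hX (by simp [Finset.sum_mul, hAX]))
  · intro hno
    by_contra! hc
    have hspan (M) (hM : M ∈ Submodule.span ℝ (Set.range A)) :
        ∃ c : Fin k → ℝ, ∑ i, c i • A i = M :=
      (Submodule.mem_span_range_iff_exists_fun ℝ).mp hM
    obtain ⟨X, hX, hVX⟩ := exists_posDef_forall_trace_mul_eq_zero (Submodule.span ℝ (Set.range A))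
      (fun M hM => by
        obtain ⟨c, rfl⟩ := hspan M hM
        simp [IsSymm, transpose_sum, fun i => (hA i).eq])
      (fun M hM hMpsd => by
        obtain ⟨c, rfl⟩ := hspan M hM
        exact not_not.mp fun h0 => hc c h0 hMpsd)
    obtain ⟨r, hr, hdet⟩ := exists_pos_det_smul_eq_one hX.det_pos
    refine hno ⟨r • X, hX.smul hr, hdet, fun i => ?_⟩
    rw [Matrix.mul_smul, trace_smul, hVX _ (Submodule.subset_span ⟨i, rfl⟩), smul_zero]

/-- A collection of symmetric matrices has a nonzero positive semidefinite
linear combination iff the intersection of the hyperplanes `A_i^⊥` in `𝒫(n)` is empty. -/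
theorem semidefinite_combination_iff_empty_intersection
    (n k : ℕ) (hn : 1 ≤ n) (hk : 1 ≤ k)
    (A : Fin k → Matrix (Fin n) (Fin n) ℝ) (hA : ∀ i, (A i).IsSymm) :
    (∃ c : Fin k → ℝ, (∑ i, c i • A i) ≠ 0 ∧ (∑ i, c i • A i).PosSemidef) ↔
      ¬∃ X : Matrix (Fin n) (Fin n) ℝ,
        X.PosDef ∧ X.det = 1 ∧ ∀ i, (A i * X).trace = 0 :=
  semidefinite_combination_iff_empty_intersection_general n k A hA
end

section
/- Let d ≥ 1, let λ ∈ ℝ, and let J_{λ,d} be the d×d upper-triangular Jordan block with eigenvalue λ (entries λ on the diagonal, 1 on the superdiagonal, 0 elsewhere). Suppose A and B are real symmetric d×d matrices satisfying A = B·J_{λ,d}. Then, using 1-based indices: (1) A_{j,k} = A_{j',k'} whenever j + k = j' + k', and A_{j,k} = 0 whenever j + k ≤ d; and (2) the same two properties hold for the entries of B. -/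
/-!
Write `J = λ • 1 + N` with `N` the nilpotent shift. Then `B * N = A - λ • B` is symmetric, and
`B * N` is `B` with its columns moved one step to the right and a zero first column. Comparing
`(B * N) (j+1) (k+1) = (B * N) (k+1) (j+1)` and using the symmetry of `B` gives
`B j (k+1) = B (j+1) k`, so `B` is Hankel; comparing `(B * N) 0 (k+1)` with `(B * N) (k+1) 0 = 0`
shows that the first row of `B`, hence every anti-diagonal above the main one, vanishes.
Hankel matrices vanishing above the main anti-diagonal are closed under linear combinations and
under `M ↦ M * N`, so `A = λ • B + B * N` has the same structure.
-/

open Matrix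

namespace Matrix

variable {α : Type*} {d n : ℕ}

def IsHankel (M : Matrix (Fin d) (Fin d) α) : Prop :=
  ∀ j k j' k' : Fin d, (j : ℕ) + (k : ℕ) = (j' : ℕ) + (k' : ℕ) → M j k = M j' k'

/-- Vanishing strictly above the main anti-diagonal. -/
def IsLowerAntitriangular [Zero α] (M : Matrix (Fin d) (Fin d) α) : Prop :=
  ∀ j k : Fin d, ((j : ℕ) + 1) + ((k : ℕ) + 1) ≤ d → M j k = 0

def jordanNilpotent [Zero α] [One α] (d : ℕ) : Matrix (Fin d) (Fin d) α :=
  fun i j => if (j : ℕ) = (i : ℕ) + 1 then 1 else 0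

theorem eq_smul_one_add_jordanNilpotent {R : Type*} [Semiring R] {lam : R}
    {J : Matrix (Fin d) (Fin d) R}
    (hJ : ∀ i j : Fin d, J i j = if j = i then lam else if (j : ℕ) = (i : ℕ) + 1 then 1 else 0) :
    J = lam • 1 + jordanNilpotent d := by
  ext i j
  by_cases hji : j = i
  · subst hji
    simp [hJ, jordanNilpotent]
  · simp [hJ, jordanNilpotent, hji, one_apply_ne' hji]

theorem IsHankel.add [Add α] {M N : Matrix (Fin d) (Fin d) α} (hM : IsHankel M)
    (hN : IsHankel N) : IsHankel (M + N) := fun j k j' k' h => by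
  simp only [add_apply, hM j k j' k' h, hN j k j' k' h]

theorem IsHankel.smul {R : Type*} [SMul R α] {M : Matrix (Fin d) (Fin d) α} (hM : IsHankel M)
    (c : R) : IsHankel (c • M) := fun j k j' k' h => by
  simp only [smul_apply, hM j k j' k' h]

theorem IsLowerAntitriangular.add [AddZeroClass α] {M N : Matrix (Fin d) (Fin d) α}
    (hM : IsLowerAntitriangular M) (hN : IsLowerAntitriangular N) :
    IsLowerAntitriangular (M + N) := fun j k h => by
  simp only [add_apply, hM j k h, hN j k h, add_zero]

theorem IsLowerAntitriangular.smul {R : Type*} [Zero α] [SMulZeroClass R α]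
    {M : Matrix (Fin d) (Fin d) α} (hM : IsLowerAntitriangular M) (c : R) :
    IsLowerAntitriangular (c • M) := fun j k h => by
  simp only [smul_apply, hM j k h, smul_zero]

theorem isHankel_of_castSucc_succ {M : Matrix (Fin (n + 1)) (Fin (n + 1)) α}
    (h : ∀ j i : Fin n, M j.castSucc i.succ = M j.succ i.castSucc) : IsHankel M := by
  suffices key : ∀ m : ℕ, ∀ j k j' k' : Fin (n + 1), (j' : ℕ) = j + m →
      (j : ℕ) + k = j' + k' → M j k = M j' k' by
    intro j k j' k' hs
    rcases le_total (j : ℕ) j' with hle | hle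
    · exact key (j' - j) j k j' k' (by omega) hs
    · exact (key (j - j') j' k' j k (by omega) hs.symm).symm
  intro m
  induction m with
  | zero =>
    intro j k j' k' hj hs
    obtain rfl : j = j' := by ext; omega
    obtain rfl : k = k' := by ext; omega
    rfl
  | succ m ih =>
    intro j k j' k' hj hs
    obtain ⟨j₀, rfl⟩ : ∃ j₀ : Fin n, j₀.castSucc = j := ⟨⟨j, by omega⟩, rfl⟩
    obtain ⟨k₀, rfl⟩ : ∃ k₀ : Fin n, k₀.succ = k := Fin.exists_succ_eq.2
      fun hk => by simp only [hk, Fin.val_castSucc, Fin.val_zero] at hj hs; omega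
    rw [h]
    exact ih _ _ _ _ (by simp only [Fin.val_succ, Fin.val_castSucc] at hj ⊢; omega)
      (by simp only [Fin.val_succ, Fin.val_castSucc] at hs ⊢; omega)

section NonAssocSemiring

variable [NonAssocSemiring α]

@[simp]
theorem mul_jordanNilpotent_apply_zero (M : Matrix (Fin (n + 1)) (Fin (n + 1)) α)
    (j : Fin (n + 1)) : (M * jordanNilpotent (n + 1) : Matrix _ _ α) j 0 = 0 := by
  simp [mul_apply, jordanNilpotent]

@[simp]
theorem mul_jordanNilpotent_apply_succ (M : Matrix (Fin (n + 1)) (Fin (n + 1)) α)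
    (j : Fin (n + 1)) (i : Fin n) :
    (M * jordanNilpotent (n + 1) : Matrix _ _ α) j i.succ = M j i.castSucc := by
  have hval (l : Fin (n + 1)) : (i : ℕ) = l ↔ i.castSucc = l := by simp [Fin.ext_iff]
  simp [mul_apply, jordanNilpotent, hval]

variable {B : Matrix (Fin (n + 1)) (Fin (n + 1)) α}

theorem isHankel_of_isSymm_mul_jordanNilpotent (hB : B.IsSymm)
    (hBN : (B * jordanNilpotent (n + 1) : Matrix _ _ α).IsSymm) : IsHankel B :=
  isHankel_of_castSucc_succ fun j i => by
    have := hBN.apply j.succ i.succ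
    simp only [mul_jordanNilpotent_apply_succ] at this
    rw [← this, hB.apply]

theorem isLowerAntitriangular_of_isSymm_mul_jordanNilpotent (hB : B.IsSymm)
    (hBN : (B * jordanNilpotent (n + 1) : Matrix _ _ α).IsSymm) : IsLowerAntitriangular B := by
  intro j k hjk
  have hrow (i : Fin n) : B 0 i.castSucc = 0 := by
    simpa using (hBN.apply 0 i.succ).symm
  rw [isHankel_of_isSymm_mul_jordanNilpotent hB hBN j k 0 (Fin.castSucc ⟨j + k, by omega⟩)
    (by simp)]
  exact hrow _

theorem IsLowerAntitriangular.mul_jordanNilpotent (hB : IsLowerAntitriangular B) :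
    IsLowerAntitriangular (B * jordanNilpotent (n + 1) : Matrix _ _ α) := by
  intro j k hjk
  cases k using Fin.cases with
  | zero => simp
  | succ i =>
    rw [mul_jordanNilpotent_apply_succ]
    exact hB _ _ (by simp only [Fin.val_succ, Fin.val_castSucc] at hjk ⊢; omega)

theorem IsHankel.mul_jordanNilpotent (hH : IsHankel B) (hL : IsLowerAntitriangular B) :
    IsHankel (B * jordanNilpotent (n + 1) : Matrix _ _ α) := by
  intro j k j' k' hs
  cases k using Fin.cases with
  | zero =>
    cases k' using Fin.cases with
    | zero => simp
    | succ i' =>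
      rw [mul_jordanNilpotent_apply_zero, mul_jordanNilpotent_apply_succ,
        hL _ _ (by simp only [Fin.val_succ, Fin.val_castSucc, Fin.val_zero] at hs ⊢; omega)]
  | succ i =>
    cases k' using Fin.cases with
    | zero =>
      rw [mul_jordanNilpotent_apply_zero, mul_jordanNilpotent_apply_succ,
        hL _ _ (by simp only [Fin.val_succ, Fin.val_castSucc, Fin.val_zero] at hs ⊢; omega)]
    | succ i' =>
      simp only [mul_jordanNilpotent_apply_succ]
      exact hH _ _ _ _ (by simp only [Fin.val_succ, Fin.val_castSucc] at hs ⊢; omega)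

end NonAssocSemiring

end Matrix

/-- If `A`, `B` are symmetric `d×d` matrices with `A = B * J` for a Jordan
block `J = J_{λ,d}`, then the entries of `A` (and of `B`) are constant along
anti-diagonals and vanish on the anti-diagonals above the main anti-diagonal
(in 1-based indices: `A_{j,k} = A_{j',k'}` when `j+k = j'+k'`, and `A_{j,k} = 0` when
`j+k ≤ d`). -/
theorem jordan_pencil_antidiagonal_structure
    (d : ℕ) (hd : 1 ≤ d) (lam : ℝ)
    (J : Matrix (Fin d) (Fin d) ℝ)
    (hJ : ∀ i j : Fin d,
      J i j = if j = i then lam else if (j : ℕ) = (i : ℕ) + 1 then 1 else 0)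
    (A B : Matrix (Fin d) (Fin d) ℝ) (hA : A.IsSymm) (hB : B.IsSymm)
    (hAB : A = B * J) :
    ((∀ j k j' k' : Fin d, (j : ℕ) + (k : ℕ) = (j' : ℕ) + (k' : ℕ) → A j k = A j' k') ∧
      (∀ j k : Fin d, ((j : ℕ) + 1) + ((k : ℕ) + 1) ≤ d → A j k = 0)) ∧
    ((∀ j k j' k' : Fin d, (j : ℕ) + (k : ℕ) = (j' : ℕ) + (k' : ℕ) → B j k = B j' k') ∧
      (∀ j k : Fin d, ((j : ℕ) + 1) + ((k : ℕ) + 1) ≤ d → B j k = 0)) := by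
  obtain ⟨n, rfl⟩ : ∃ n, d = n + 1 := ⟨d - 1, by omega⟩
  have hA_eq : A = lam • B + B * jordanNilpotent (n + 1) := by
    rw [hAB, eq_smul_one_add_jordanNilpotent hJ, mul_add, Matrix.mul_smul, mul_one]
  have hBN : (B * jordanNilpotent (n + 1)).IsSymm := by
    rw [show B * jordanNilpotent (n + 1) = A - lam • B by rw [hA_eq]; abel]
    exact hA.sub (hB.smul lam)
  have hBH := isHankel_of_isSymm_mul_jordanNilpotent hB hBN
  have hBL := isLowerAntitriangular_of_isSymm_mul_jordanNilpotent hB hBN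
  subst hA_eq
  exact ⟨⟨(hBH.smul lam).add (hBH.mul_jordanNilpotent hBL), (hBL.smul lam).add
    hBL.mul_jordanNilpotent⟩, hBH, hBL⟩
end

section
/- Fix an integer r ≥ 1. For 1 ≤ l ≤ r let K_l be the r×r real matrix whose (s,t) entry (1-based indices) is 1 if s + t = r + l and 0 otherwise. Let x_1, …, x_r be real numbers with x_1 ≠ 0, and set X = Σ_{l=1}^r x_l·K_l and X̃ = Σ_{l=1}^{r−1} x_l·K_{l+1}. Then for every real s > 0 and every real t there exists g ∈ GL(r,ℝ) with det(g) > 0 such that gᵀ·X̃·g = X̃ and gᵀ·X·g = s·X + t·X̃. -/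
/-!
Reversing the index order turns `X` and `X̃` into the Hankel matrices of the bilinear forms
`(p, q) ↦ [z^N] (p q f)` and `(p, q) ↦ [z^N] (p q z f)` on polynomials of degree `≤ N = r - 1`,
where `f = ∑ₗ x_l z^(l-1)`. Let `φ = s z / (1 - t z)` and let `b` be a power series with
`b(0) > 0`. The map `p ↦ b · p(φ)` has a triangular matrix with diagonal `b(0) sⁱ > 0`, and it
pulls the form `[z^N] (p q h)` back to `[z^N] (b² p(φ) q(φ) h)`. So it suffices that
`c = b²` satisfy `[z^N] (c φʲ f) = [z^N] (zʲ (s + t z) f)` for all `j`: this is the required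
transformation of the first form, and because `s z = φ (1 - t z)`, a downward induction on `j`
gives `[z^N] (c φʲ z f) = [z^N] (z^(j+1) f)`, i.e. invariance of the second. These conditions
form a triangular linear system in the coefficients of `c` with diagonal `sʲ f(0) ≠ 0`; its
solution has `c(0) s^N = s > 0`, so `c` has a square root in `ℝ⟦z⟧` by Hensel's lemma.
-/

open Matrix PowerSeries

noncomputable section

namespace PowerSeries

section Hankel

variable {R : Type*} [CommRing R]

theorem coeff_X_pow_sub_mul (N : ℕ) (i : Fin (N + 1)) (w : R⟦X⟧) :
    coeff N (X ^ (N - i : ℕ) * w) = coeff i w := by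
  rw [coeff_X_pow_mul', if_pos (Nat.sub_le _ _), Nat.sub_sub_self (Nat.lt_succ_iff.mp i.isLt)]

theorem coeff_mul_eq_sum_coeff_mul_coeff_X_pow_mul (N : ℕ) (p w : R⟦X⟧) :
    coeff N (p * w) = ∑ i : Fin (N + 1), coeff i p * coeff N (X ^ (i : ℕ) * w) := by
  rw [coeff_mul, Finset.Nat.sum_antidiagonal_eq_sum_range_succ_mk, Finset.sum_range]
  refine Finset.sum_congr rfl fun i _ => ?_
  rw [coeff_X_pow_mul', if_pos (Nat.lt_succ_iff.mp i.isLt)]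

def hankelMatrix (N : ℕ) (h : R⟦X⟧) : Matrix (Fin (N + 1)) (Fin (N + 1)) R :=
  of fun i j => coeff N (X ^ ((i : ℕ) + j) * h)

def coeffMatrix (N : ℕ) (v : Fin (N + 1) → R⟦X⟧) : Matrix (Fin (N + 1)) (Fin (N + 1)) R :=
  of fun i j => coeff i (v j)

theorem coeffMatrix_transpose_mul_hankelMatrix_mul (N : ℕ) (v : Fin (N + 1) → R⟦X⟧)
    (h : R⟦X⟧) :
    (coeffMatrix N v)ᵀ * hankelMatrix N h * coeffMatrix N v =
      of fun u w => coeff N (v u * v w * h) := by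
  ext u w
  simp only [mul_apply, transpose_apply, coeffMatrix, hankelMatrix, of_apply, Finset.sum_mul]
  rw [mul_assoc, coeff_mul_eq_sum_coeff_mul_coeff_X_pow_mul, Finset.sum_comm]
  refine Finset.sum_congr rfl fun i _ => ?_
  rw [show X ^ (i : ℕ) * (v w * h) = v w * (X ^ (i : ℕ) * h) by ring,
    coeff_mul_eq_sum_coeff_mul_coeff_X_pow_mul, Finset.mul_sum]
  refine Finset.sum_congr rfl fun j _ => ?_
  rw [pow_add, show X ^ (j : ℕ) * (X ^ (i : ℕ) * h) = X ^ (i : ℕ) * X ^ (j : ℕ) * h by ring]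
  ring

theorem hankelMatrix_X_pow_mul_submatrix_rev_apply (N a : ℕ) (h : R⟦X⟧) (u v : Fin (N + 1)) :
    (hankelMatrix N (X ^ a * h)).submatrix Fin.revPerm Fin.revPerm u v =
      ∑ l : Fin (N + 1), coeff l h * if (u : ℕ) + v = N + a + l then 1 else 0 := by
  rw [submatrix_apply, hankelMatrix, of_apply, ← mul_assoc, mul_comm,
    coeff_mul_eq_sum_coeff_mul_coeff_X_pow_mul]
  refine Finset.sum_congr rfl fun l _ => ?_
  simp only [← pow_add, coeff_X_pow]
  congr 1
  simp only [Fin.revPerm_apply, Fin.val_rev]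
  grind

end Hankel

theorem exists_mul_self_eq {R : Type*} [CommRing R] (c : R⟦X⟧) (a : R) (ha : IsUnit (2 * a))
    (hc : constantCoeff c = a * a) : ∃ b : R⟦X⟧, b * b = c ∧ constantCoeff b = a := by
  have hmem {p : R⟦X⟧} : p ∈ Ideal.span {X} ↔ constantCoeff p = 0 := by
    rw [Ideal.mem_span_singleton, X_dvd_iff]
  obtain ⟨b, hroot, hb⟩ := HenselianRing.is_henselian (I := Ideal.span {(X : R⟦X⟧)})
    (Polynomial.X ^ 2 - Polynomial.C c) (Polynomial.monic_X_pow_sub_C c two_ne_zero) (C a)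
    (by simp [hmem, hc, sq])
    (by
      have hderiv : (Polynomial.X ^ 2 - Polynomial.C c).derivative.eval (C a) = C (2 * a) := by
        rw [Polynomial.derivative_sub, Polynomial.derivative_X_sq, Polynomial.derivative_C,
          sub_zero]
        simp [map_ofNat]
      exact hderiv ▸ (ha.map C).map _)
  refine ⟨b, ?_, ?_⟩
  · simpa [sq, sub_eq_zero] using hroot
  · simpa [hmem, sub_eq_zero] using hb

section Mobius

variable {k : Type*} [Field k] {s t : k}

def mobius (s t : k) : k⟦X⟧ := C s * X * (1 - C t * X)⁻¹

theorem mobius_mul_one_sub : mobius s t * (1 - C t * X) = C s * X := by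
  rw [mobius, mul_assoc, PowerSeries.inv_mul_cancel _ (by simp), mul_one]

theorem mul_mobius_pow (j : ℕ) (a : k⟦X⟧) :
    a * mobius s t ^ j = X ^ j * (a * (C s * (1 - C t * X)⁻¹) ^ j) := by
  rw [mobius, mul_right_comm, mul_pow, mul_pow]
  ring

theorem coeff_mul_mobius_pow_of_lt {n j : ℕ} (h : n < j) (a : k⟦X⟧) :
    coeff n (a * mobius s t ^ j) = 0 := by
  rw [mul_mobius_pow, coeff_X_pow_mul', if_neg (by omega)]

theorem coeff_mul_mobius_pow_self (j : ℕ) (a : k⟦X⟧) :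
    coeff j (a * mobius s t ^ j) = s ^ j * constantCoeff a := by
  rw [mul_mobius_pow, coeff_X_pow_mul', if_pos le_rfl, Nat.sub_self, coeff_zero_eq_constantCoeff]
  simp [constantCoeff_inv, mul_comm]

theorem det_coeffMatrix_mul_mobius_pow (N : ℕ) (a : k⟦X⟧) :
    (coeffMatrix N fun j => a * mobius s t ^ (j : ℕ)).det =
      ∏ j : Fin (N + 1), s ^ (j : ℕ) * constantCoeff a := by
  rw [det_of_isLowerTriangular]
  · exact Finset.prod_congr rfl fun j _ => coeff_mul_mobius_pow_self _ _
  · exact fun i j hij => coeff_mul_mobius_pow_of_lt hij _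

theorem exists_coeff_mul_mobius_pow_mul_eq (N : ℕ) (hs : s ≠ 0) {f : k⟦X⟧}
    (hf : constantCoeff f ≠ 0) (y : Fin (N + 1) → k) :
    ∃ c : k⟦X⟧, ∀ j : Fin (N + 1), coeff N (c * mobius s t ^ (j : ℕ) * f) = y j := by
  set A := coeffMatrix N fun j => f * mobius s t ^ (j : ℕ)
  have hA : IsUnit A := by
    rw [isUnit_iff_isUnit_det, det_coeffMatrix_mul_mobius_pow, isUnit_iff_ne_zero]
    exact Finset.prod_ne_zero_iff.mpr fun j _ => mul_ne_zero (pow_ne_zero _ hs) hf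
  obtain ⟨a, ha⟩ := vecMul_surjective_iff_isUnit.mpr hA y
  -- `coeff N (X ^ (N - i) * w) = coeff i w` turns the conditions on `c` into `a ᵥ* A = y`.
  refine ⟨∑ i : Fin (N + 1), C (a i) * X ^ (N - i : ℕ), fun j => ?_⟩
  rw [← ha]
  simp only [vecMul, dotProduct, A, coeffMatrix, of_apply, Finset.sum_mul, map_sum]
  refine Finset.sum_congr rfl fun i _ => ?_
  rw [mul_assoc, mul_assoc, coeff_C_mul, mul_comm (mobius s t ^ (j : ℕ)),
    coeff_X_pow_sub_mul]

theorem exists_coeff_mul_mobius_pow_mul_eq_coeff_X_pow_mul (N : ℕ) (hs : s ≠ 0)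
    {f : k⟦X⟧} (hf : constantCoeff f ≠ 0) :
    ∃ c : k⟦X⟧, constantCoeff c * s ^ N = s ∧ ∀ j : ℕ,
      coeff N (c * mobius s t ^ j * f) = coeff N (X ^ j * (C s + C t * X) * f) := by
  obtain ⟨c, hc⟩ := exists_coeff_mul_mobius_pow_mul_eq N hs (t := t) hf
    fun j => coeff N (X ^ (j : ℕ) * (C s + C t * X) * f)
  have hc' (j : ℕ) :
      coeff N (c * mobius s t ^ j * f) = coeff N (X ^ j * (C s + C t * X) * f) := by
    rcases lt_or_ge N j with hNj | hjN
    · rw [mul_right_comm, coeff_mul_mobius_pow_of_lt hNj, mul_assoc, coeff_X_pow_mul',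
        if_neg (by omega)]
    · exact hc ⟨j, Nat.lt_succ_of_le hjN⟩
  refine ⟨c, ?_, hc'⟩
  have hN := hc' N
  rw [mul_right_comm, coeff_mul_mobius_pow_self, mul_assoc, coeff_X_pow_mul', if_pos le_rfl,
    Nat.sub_self, coeff_zero_eq_constantCoeff] at hN
  simp only [map_mul, map_add, constantCoeff_C, constantCoeff_X, mul_zero, add_zero] at hN
  exact mul_right_cancel₀ hf (by linear_combination hN)

theorem coeff_mul_mobius_pow_mul_X_mul (N : ℕ) (hs : s ≠ 0) {c f : k⟦X⟧}
    (hc : ∀ j : ℕ, coeff N (c * mobius s t ^ j * f) = coeff N (X ^ j * (C s + C t * X) * f))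
    (j : ℕ) : coeff N (c * mobius s t ^ j * (X * f)) = coeff N (X ^ j * (X * f)) := by
  induction h : N + 1 - j generalizing j with
  | zero =>
    rw [mul_right_comm, show c * (X * f) = X * (c * f) by ring,
      coeff_mul_mobius_pow_of_lt (by omega), coeff_X_pow_mul', if_neg (by omega)]
  | succ d ih =>
    have hnext := ih (j + 1) (by omega)
    refine mul_left_cancel₀ hs ?_
    calc s * coeff N (c * mobius s t ^ j * (X * f))
        = coeff N (c * mobius s t ^ j * (mobius s t * (1 - C t * X)) * f) := by
          rw [mobius_mul_one_sub, ← coeff_C_mul]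
          ring_nf
      _ = coeff N (c * mobius s t ^ (j + 1) * f)
            - t * coeff N (c * mobius s t ^ (j + 1) * (X * f)) := by
          rw [← coeff_C_mul, ← map_sub]
          ring_nf
      _ = s * coeff N (X ^ j * (X * f)) := by
          rw [hc, hnext, ← coeff_C_mul, ← map_sub, ← coeff_C_mul]
          ring_nf

end Mobius

theorem exists_hankelMatrix_congruence (N : ℕ) {s : ℝ} (hs : 0 < s) (t : ℝ) {f : ℝ⟦X⟧}
    (hf : constantCoeff f ≠ 0) :
    ∃ g : Matrix (Fin (N + 1)) (Fin (N + 1)) ℝ, 0 < g.det ∧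
      gᵀ * hankelMatrix N (X * f) * g = hankelMatrix N (X * f) ∧
      gᵀ * hankelMatrix N f * g = s • hankelMatrix N f + t • hankelMatrix N (X * f) := by
  obtain ⟨c, hc0, hc⟩ := exists_coeff_mul_mobius_pow_mul_eq_coeff_X_pow_mul N hs.ne' (t := t) hf
  have hc0_pos : 0 < constantCoeff c :=
    pos_of_mul_pos_left (hc0.symm ▸ hs : 0 < constantCoeff c * s ^ N) (pow_nonneg hs.le N)
  obtain ⟨b, hbb, hb0⟩ := exists_mul_self_eq c √(constantCoeff c)
    (isUnit_iff_ne_zero.mpr (by positivity)) (Real.mul_self_sqrt hc0_pos.le).symm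
  set g := coeffMatrix N fun j => b * mobius s t ^ (j : ℕ)
  have hgram (h : ℝ⟦X⟧) :
      gᵀ * hankelMatrix N h * g =
        of fun u v : Fin (N + 1) => coeff N (c * mobius s t ^ ((u : ℕ) + v) * h) := by
    rw [coeffMatrix_transpose_mul_hankelMatrix_mul]
    ext u v
    rw [of_apply, of_apply, ← hbb, pow_add]
    ring_nf
  refine ⟨g, ?_, ?_, ?_⟩
  · rw [det_coeffMatrix_mul_mobius_pow, hb0]
    exact Finset.prod_pos fun j _ => by positivity
  · ext u v
    rw [hgram, of_apply, coeff_mul_mobius_pow_mul_X_mul N hs.ne' hc, hankelMatrix, of_apply]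
  · ext u v
    rw [hgram, of_apply, hc, Matrix.add_apply, Matrix.smul_apply, Matrix.smul_apply, hankelMatrix,
      hankelMatrix, of_apply, of_apply, smul_eq_mul, smul_eq_mul, ← coeff_C_mul, ← coeff_C_mul,
      ← map_add]
    ring_nf

end PowerSeries

end

/-- For the anti-diagonal band matrices `K_l` and
`X = ∑_{l=1}^r x_l K_l`, `X̃ = ∑_{l=1}^{r-1} x_l K_{l+1}` (with `x_1 ≠ 0`), for every
`s > 0` and `t ∈ ℝ` there is `g ∈ GL⁺(r,ℝ)` with `gᵀ X̃ g = X̃` and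
`gᵀ X g = s·X + t·X̃`. (Indices are written 0-based: the 1-based condition
`s + t = r + l` becomes `s + t + 1 = r + l` for `s,t,l : Fin r`.) -/
theorem antidiagonal_band_congruence
    (r : ℕ) (hr : 1 ≤ r) (x : Fin r → ℝ) (hx : x ⟨0, hr⟩ ≠ 0)
    (K : Fin r → Matrix (Fin r) (Fin r) ℝ)
    (hK : ∀ l u v : Fin r,
      K l u v = if (u : ℕ) + (v : ℕ) + 1 = r + (l : ℕ) then 1 else 0)
    (X Xt : Matrix (Fin r) (Fin r) ℝ)
    (hX : X = ∑ l, x l • K l)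
    (hXt : ∀ u v : Fin r,
      Xt u v = ∑ l : Fin r, x l * (if (u : ℕ) + (v : ℕ) = r + (l : ℕ) then 1 else 0)) :
    ∀ s : ℝ, 0 < s → ∀ t : ℝ,
      ∃ g : Matrix (Fin r) (Fin r) ℝ, 0 < g.det ∧
        gᵀ * Xt * g = Xt ∧ gᵀ * X * g = s • X + t • Xt := by
  intro s hs t
  obtain ⟨N, rfl⟩ : ∃ N, r = N + 1 := ⟨r - 1, by omega⟩
  set f : ℝ⟦X⟧ := mk fun i => if h : i < N + 1 then x ⟨i, h⟩ else 0
  have hf (l : Fin (N + 1)) : coeff l f = x l := by rw [coeff_mk, dif_pos l.isLt]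
  have hX' : X = (hankelMatrix N (PowerSeries.X ^ 0 * f)).submatrix Fin.revPerm Fin.revPerm := by
    ext u v
    simp only [hX, hankelMatrix_X_pow_mul_submatrix_rev_apply, hf, Matrix.sum_apply,
      Matrix.smul_apply, hK, smul_eq_mul, add_zero, add_right_comm N 1, Nat.add_right_cancel_iff]
  have hXt' : Xt = (hankelMatrix N (PowerSeries.X ^ 1 * f)).submatrix Fin.revPerm Fin.revPerm := by
    ext u v
    simp only [hXt, hankelMatrix_X_pow_mul_submatrix_rev_apply, hf]
  obtain ⟨g, hg, hXtg, hXg⟩ :=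
    exists_hankelMatrix_congruence N hs t (f := f) (by simpa [f] using hx)
  refine ⟨g.submatrix Fin.revPerm Fin.revPerm, by rwa [det_submatrix_equiv_self], ?_, ?_⟩
  · rw [hXt', pow_one, transpose_submatrix, submatrix_mul_equiv, submatrix_mul_equiv, hXtg]
  · rw [hX', hXt', pow_zero, one_mul, pow_one, transpose_submatrix, submatrix_mul_equiv,
      submatrix_mul_equiv, hXg]
    rfl
end

section
/- Let A and B be real symmetric n×n matrices with B invertible, and let λ ≠ λ' be real numbers such that every complex root of the polynomial det(A − z·B) equals λ or λ' (i.e. λ and λ' are the only generalized eigenvalues of the pencil (A,B)). Set C = A − λ·B and C' = A − λ'·B. Then for all real s > 0 and s' > 0 there exists g ∈ GL(n,ℝ) with det(g) > 0 such that gᵀ·C·g = s·C and gᵀ·C'·g = s'·C'. -/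
/-!
Write `C = A - λB` and `C' = A - λ'B`. If `XᵀC + CX = (log s) C` and `XᵀC' + C'X = (log s') C'`,
then `g = exp X` works, and `det (exp X) = det (exp (X / 2))² > 0`. By duality for the trace
pairing, such an `X` exists as soon as every pair of symmetric `S, S'` with `CS + C'S' = 0` has
`tr (CS) = tr (C'S') = 0`. For `N = B⁻¹C`, `N' = B⁻¹C'` we have `N - N' = (λ' - λ) • 1`, and `NN'`
is nilpotent since `λ, λ'` are the only eigenvalues of `B⁻¹A`. The relation `CS + C'S' = 0` and its
transpose make `W = (S + S')B` commute with `N`, and then `(λ' - λ) tr (CS) = -tr (NN'W) = 0`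
because `NN'W` is nilpotent.
-/

open Matrix NormedSpace Polynomial

namespace Matrix

variable {m : Type*} [Fintype m]

section CommRing

variable {R : Type*} [CommRing R] {C : Matrix m m R}

theorem trace_transpose_mul_add_mul_mul (hC : Cᵀ = C) (X Y : Matrix m m R) :
    trace ((Xᵀ * C + C * X) * Y) = trace (Xᵀ * (C * (Y + Yᵀ))) := by
  have hCXY : trace (C * X * Y) = trace (Xᵀ * (C * Yᵀ)) := by
    rw [← trace_transpose, transpose_mul, transpose_mul, hC, trace_mul_comm, Matrix.mul_assoc]
  rw [add_mul, trace_add, hCXY, Matrix.mul_add, Matrix.mul_add, trace_add, Matrix.mul_assoc]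

theorem trace_mul_add_transpose (hC : Cᵀ = C) (Y : Matrix m m R) :
    trace (C * (Y + Yᵀ)) = 2 * trace (C * Y) := by
  rw [Matrix.mul_add, trace_add, ← trace_transpose (C * Yᵀ), transpose_mul, transpose_transpose, hC,
    trace_mul_comm Y, two_mul]

end CommRing

variable [DecidableEq m]

theorem exp_smul_one (μ : ℝ) : exp (μ • (1 : Matrix m m ℝ)) = Real.exp μ • 1 := by
  rw [smul_one_eq_diagonal, exp_diagonal, smul_one_eq_diagonal]
  congr
  ext
  simp [Real.exp_eq_exp_ℝ]

theorem _root_.SemiconjBy.matrix_exp {C A B : Matrix m m ℝ} (h : SemiconjBy C A B) :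
    SemiconjBy C (exp A) (exp B) := by
  -- `exp` depends only on the topology, so any submultiplicative norm may be used here
  let : NormedRing (Matrix m m ℝ) := Matrix.linftyOpNormedRing
  let : NormedAlgebra ℝ (Matrix m m ℝ) := Matrix.linftyOpNormedAlgebra
  let : NormedAlgebra ℚ (Matrix m m ℝ) := NormedAlgebra.restrictScalars ℚ ℝ _
  exact h.exp_right

theorem exp_transpose_mul_mul_exp {C X : Matrix m m ℝ} {μ : ℝ}
    (h : Xᵀ * C + C * X = μ • C) : (exp X)ᵀ * C * exp X = Real.exp μ • C := by
  have hsemi : SemiconjBy C (μ • 1 - X) Xᵀ := by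
    rw [SemiconjBy, mul_sub, mul_smul_one, ← h, add_sub_cancel_right]
  have hsplit : exp (μ • 1 - X) * exp X = Real.exp μ • 1 := by
    rw [← exp_add_of_commute _ _ ((Commute.one_left X).smul_left μ |>.sub_left (.refl X)),
      sub_add_cancel, exp_smul_one]
  rw [← exp_transpose, ← hsemi.matrix_exp.eq, mul_assoc, hsplit, mul_smul_one]

theorem det_exp_pos (X : Matrix m m ℝ) : 0 < (exp X).det := by
  have hhalf : exp X = exp ((1 / 2 : ℝ) • X) * exp ((1 / 2 : ℝ) • X) := by
    rw [← exp_add_of_commute _ _ (.refl _), ← add_smul, add_halves, one_smul]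
  have hunit : IsUnit (exp ((1 / 2 : ℝ) • X)).det :=
    (isUnit_iff_isUnit_det _).mp (isUnit_exp _)
  rw [hhalf, det_mul]
  exact mul_self_pos.mpr hunit.ne_zero

theorem det_sub_smul_eq_of_mul_eq {R : Type*} [CommRing R] {A B M : Matrix m m R}
    (hBM : B * M = A) (z : R) :
    (A - z • B).det = (-1) ^ Fintype.card m * B.det * M.charpoly.eval z := by
  have : A - z • B = -(B * (scalar m z - M)) := by
    rw [← hBM, scalar_apply, ← smul_one_eq_diagonal, mul_sub, mul_smul_one]
    abel
  rw [eval_charpoly, this, det_neg, det_mul, mul_assoc]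

theorem isNilpotent_aeval_of_forall_isRoot {K L : Type*} [Field K] [Field L] [IsAlgClosed L]
    (f : K →+* L) (M : Matrix m m K) (p : K[X])
    (h : ∀ z, (M.map f).charpoly.IsRoot z → (p.map f).IsRoot z) : IsNilpotent (aeval M p) := by
  rw [charpoly_map] at h
  have hq : (M.charpoly.map f).Splits := IsAlgClosed.splits _
  have hdvd : M.charpoly.map f ∣ p.map f ^ Fintype.card m :=
    calc M.charpoly.map f = ((M.charpoly.map f).roots.map fun a => X - C a).prod :=
          hq.eq_prod_roots_of_monic ((charpoly_monic M).map f)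
      _ ∣ ((M.charpoly.map f).roots.map fun _ => p.map f).prod :=
          Multiset.prod_dvd_prod_of_dvd _ _ fun a ha =>
            dvd_iff_isRoot.mpr (h a (isRoot_of_mem_roots ha))
      _ = p.map f ^ Fintype.card m := by
        rw [Multiset.map_const', Multiset.prod_replicate, splits_iff_card_roots.mp hq,
          natDegree_map, charpoly_natDegree_eq_dim]
  rw [← Polynomial.map_pow, map_dvd_map f f.injective (charpoly_monic M)] at hdvd
  obtain ⟨r, hr⟩ := hdvd
  exact ⟨Fintype.card m, by rw [← map_pow, hr, map_mul, aeval_self_charpoly, zero_mul]⟩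

theorem isNilpotent_of_det_sub_smul_eq_zero {K L : Type*} [Field K] [Field L] [IsAlgClosed L]
    (f : K →+* L) {A B : Matrix m m K} (hB : IsUnit B.det) {lam lam' : K}
    (heig : ∀ z : L, (A.map f - z • B.map f).det = 0 → z = f lam ∨ z = f lam') :
    IsNilpotent ((B⁻¹ * A - lam • 1) * (B⁻¹ * A - lam' • 1)) := by
  have haeval : (B⁻¹ * A - lam • 1) * (B⁻¹ * A - lam' • 1)
      = aeval (B⁻¹ * A) ((X - C lam) * (X - C lam')) := by
    simp [Algebra.algebraMap_eq_smul_one]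
  rw [haeval]
  refine isNilpotent_aeval_of_forall_isRoot f _ _ fun z hz => ?_
  have hBM : B.map f * (B⁻¹ * A).map f = A.map f := by
    rw [← Matrix.map_mul, ← Matrix.mul_assoc, mul_nonsing_inv B hB, Matrix.one_mul]
  have hdet := det_sub_smul_eq_of_mul_eq hBM z
  rw [hz.eq_zero, mul_zero] at hdet
  rcases heig z hdet with rfl | rfl <;> simp

variable {K : Type*} [Field K]

theorem trace_mul_eq_zero_of_sub_eq_smul_one {N N' Z Z' : Matrix m m K} {c : K} (hc : c ≠ 0)
    (hN : N - N' = c • 1) (hnil : IsNilpotent (N * N'))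
    (h : N * Z + N' * Z' = 0) (h' : Z * N + Z' * N' = 0) :
    trace (N * Z) = 0 ∧ trace (N' * Z') = 0 := by
  set W := Z + Z'
  have hN' : N' = N - c • 1 := by rw [← hN, sub_sub_cancel]
  have hNW : N * W = c • Z' :=
    calc N * W = (N * Z + N' * Z') + (N - N') * Z' := by rw [mul_add, sub_mul]; abel
      _ = c • Z' := by rw [h, hN, zero_add, smul_one_mul]
  have hWN : W * N = c • Z' :=
    calc W * N = (Z * N + Z' * N') + Z' * (N - N') := by rw [add_mul, mul_sub]; abel
      _ = c • Z' := by rw [h', hN, zero_add, mul_smul_one]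
  have hN'N : Commute N' N := hN' ▸ (Commute.refl N).sub_left ((Commute.one_left N).smul_left c)
  have hcommN : Commute W N := hWN.trans hNW.symm
  have hcommN' : Commute W N' := hN' ▸ hcommN.sub_right ((Commute.one_right W).smul_right c)
  have hZ : c • Z = -(N' * W) :=
    calc c • Z = c • W - N * W := by rw [hNW, smul_add, add_sub_cancel_right]
      _ = -(N' * W) := by rw [hN', sub_mul, smul_one_mul]; abel
  have htr : trace (N * N' * W) = 0 :=
    (isNilpotent_trace_of_isNilpotent
      ((hcommN.mul_right hcommN').symm.isNilpotent_mul_right hnil)).eq_zero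
  constructor
  · refine (smul_eq_zero.mp ?_).resolve_left hc
    rw [← trace_smul, ← mul_smul_comm, hZ, mul_neg, trace_neg, ← mul_assoc, htr, neg_zero]
  · refine (smul_eq_zero.mp ?_).resolve_left hc
    rw [← trace_smul, ← mul_smul_comm, ← hNW, ← mul_assoc, hN'N.eq, htr]

theorem trace_mul_eq_zero_of_mul_add_mul_eq_zero {B C C' S S' : Matrix m m K} (hB : IsUnit B.det)
    (hC : Cᵀ = C) (hC' : C'ᵀ = C') {c : K} (hc : c ≠ 0) (hCC' : C - C' = c • B)
    (hnil : IsNilpotent (B⁻¹ * C * (B⁻¹ * C'))) (hS : Sᵀ = S) (hS' : S'ᵀ = S')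
    (h : C * S + C' * S' = 0) : trace (C * S) = 0 ∧ trace (C' * S') = 0 := by
  have hBB' : B * B⁻¹ = 1 := mul_nonsing_inv B hB
  have hcancel : ∀ D E : Matrix m m K, E * B * (B⁻¹ * D) = E * D := fun D E => by
    rw [Matrix.mul_assoc, ← Matrix.mul_assoc B, hBB', Matrix.one_mul]
  have htr : ∀ D E : Matrix m m K, trace (B⁻¹ * D * (E * B)) = trace (D * E) := fun D E => by
    rw [trace_mul_comm, hcancel, trace_mul_comm]
  have hN : B⁻¹ * C - B⁻¹ * C' = c • 1 := by
    rw [← Matrix.mul_sub, hCC', mul_smul_comm, nonsing_inv_mul B hB]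
  have hNZ : B⁻¹ * C * (S * B) + B⁻¹ * C' * (S' * B) = 0 :=
    calc _ = B⁻¹ * (C * S + C' * S') * B := by
          simp only [Matrix.mul_add, Matrix.add_mul, Matrix.mul_assoc]
      _ = 0 := by rw [h, Matrix.mul_zero, Matrix.zero_mul]
  have hZN : S * B * (B⁻¹ * C) + S' * B * (B⁻¹ * C') = 0 := by
    have h' := congrArg transpose h
    rwa [transpose_add, transpose_mul, transpose_mul, hS, hC, hS', hC', transpose_zero,
      ← hcancel C, ← hcancel C'] at h'
  simpa only [htr] using trace_mul_eq_zero_of_sub_eq_smul_one hc hN hnil hNZ hZN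

theorem exists_trace_mul_eq_s7 (φ : Module.Dual K (Matrix m m K)) :
    ∃ Y, ∀ Z, φ Z = trace (Z * Y) := by
  let β : Matrix m m K →ₗ[K] Matrix m m K →ₗ[K] K :=
    (LinearMap.mul K _).compr₂ (traceLinearMap m K K)
  have hβ : Function.Injective β := fun Z₁ Z₂ h =>
    ext_iff_trace_mul_right.mpr fun Y => LinearMap.congr_fun h Y
  obtain ⟨Y, hY⟩ := LinearMap.flip_surjective_iff₁.mpr hβ φ
  exact ⟨Y, fun Z => (LinearMap.congr_fun hY Z).symm⟩

theorem exists_transpose_mul_add_mul_eq_smul [NeZero (2 : K)] {C C' : Matrix m m K}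
    (hC : Cᵀ = C) (hC' : C'ᵀ = C')
    (h : ∀ S S' : Matrix m m K, Sᵀ = S → S'ᵀ = S' → C * S + C' * S' = 0 →
      trace (C * S) = 0 ∧ trace (C' * S') = 0)
    (μ μ' : K) : ∃ X : Matrix m m K, Xᵀ * C + C * X = μ • C ∧ Xᵀ * C' + C' * X = μ' • C' := by
  let L : Matrix m m K → Matrix m m K →ₗ[K] Matrix m m K := fun D =>
    LinearMap.mulRight K D ∘ₗ (transposeLinearEquiv m m K K).toLinearMap + LinearMap.mulLeft K D
  have hL : ∀ D X, L D X = Xᵀ * D + D * X := fun _ _ => rfl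
  suffices (μ • C, μ' • C') ∈ LinearMap.range ((L C).prod (L C')) by
    obtain ⟨X, hX⟩ := this
    exact ⟨X, congrArg Prod.fst hX, congrArg Prod.snd hX⟩
  rw [← Subspace.forall_mem_dualAnnihilator_apply_eq_zero_iff]
  intro φ hφ
  rw [Submodule.mem_dualAnnihilator] at hφ
  obtain ⟨Y, hY⟩ := exists_trace_mul_eq_s7 (φ ∘ₗ LinearMap.inl K _ _)
  obtain ⟨Y', hY'⟩ := exists_trace_mul_eq_s7 (φ ∘ₗ LinearMap.inr K _ _)
  have hφ_apply : ∀ Z Z', φ (Z, Z') = trace (Z * Y) + trace (Z' * Y') := fun Z Z' => by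
    rw [← hY, ← hY', LinearMap.comp_apply, LinearMap.comp_apply, ← map_add, LinearMap.inl_apply,
      LinearMap.inr_apply, Prod.mk_add_mk, add_zero, zero_add]
  have hrel : C * (Y + Yᵀ) + C' * (Y' + Y'ᵀ) = 0 := by
    refine ext_iff_trace_mul_left.mpr fun X => ?_
    have hX := hφ _ (LinearMap.mem_range_self _ Xᵀ)
    change φ (L C Xᵀ, L C' Xᵀ) = 0 at hX
    rw [hφ_apply, hL, hL, trace_transpose_mul_add_mul_mul hC,
      trace_transpose_mul_add_mul_mul hC', ← trace_add, ← Matrix.mul_add, transpose_transpose] at hX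
    rw [hX, Matrix.mul_zero, trace_zero]
  have hsymm : ∀ Z : Matrix m m K, (Z + Zᵀ)ᵀ = Z + Zᵀ := fun Z => by
    rw [transpose_add, transpose_transpose, add_comm]
  obtain ⟨hS, hS'⟩ := h _ _ (hsymm Y) (hsymm Y') hrel
  rw [trace_mul_add_transpose hC, mul_eq_zero, or_iff_right two_ne_zero] at hS
  rw [trace_mul_add_transpose hC', mul_eq_zero, or_iff_right two_ne_zero] at hS'
  rw [hφ_apply, smul_mul_assoc, trace_smul, smul_mul_assoc, trace_smul, hS, hS', smul_zero,
    smul_zero, add_zero]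

end Matrix

/-- If the regular symmetric pencil `(A,B)` (with `B` invertible) has
exactly the two generalized eigenvalues `λ ≠ λ'`, and `C = A - λB`, `C' = A - λ'B`, then
for all `s, s' > 0` there exists `g` with `det g > 0`, `gᵀ C g = s·C` and
`gᵀ C' g = s'·C'`. -/
theorem two_eigenvalue_pencil_congruence
    (n : ℕ) (A B : Matrix (Fin n) (Fin n) ℝ) (hA : A.IsSymm) (hB : B.IsSymm)
    (hBinv : IsUnit B.det) (lam lam' : ℝ) (hne : lam ≠ lam')
    (heig : ∀ z : ℂ,
      ((A.map (Complex.ofReal)) - z • (B.map (Complex.ofReal))).det = 0 →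
        z = (lam : ℂ) ∨ z = (lam' : ℂ)) :
    ∀ s : ℝ, 0 < s → ∀ s' : ℝ, 0 < s' →
      ∃ g : Matrix (Fin n) (Fin n) ℝ, 0 < g.det ∧
        gᵀ * (A - lam • B) * g = s • (A - lam • B) ∧
        gᵀ * (A - lam' • B) * g = s' • (A - lam' • B) := by
  intro s hs s' hs'
  have hsymm : ∀ t : ℝ, (A - t • B)ᵀ = A - t • B := fun t => by
    rw [transpose_sub, transpose_smul, hA.eq, hB.eq]
  have hnil : IsNilpotent (B⁻¹ * (A - lam • B) * (B⁻¹ * (A - lam' • B))) := by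
    simpa only [Matrix.mul_sub, mul_smul_comm, nonsing_inv_mul B hBinv]
      using isNilpotent_of_det_sub_smul_eq_zero Complex.ofRealHom hBinv heig
  have hpencil : (A - lam • B) - (A - lam' • B) = (lam' - lam) • B := by
    rw [sub_smul]; abel
  obtain ⟨X, hX, hX'⟩ := exists_transpose_mul_add_mul_eq_smul (hsymm lam) (hsymm lam')
    (fun _ _ => trace_mul_eq_zero_of_mul_add_mul_eq_zero hBinv (hsymm lam) (hsymm lam')
      (sub_ne_zero.mpr hne.symm) hpencil hnil) (Real.log s) (Real.log s')
  refine ⟨exp X, det_exp_pos X, ?_, ?_⟩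
  · rw [exp_transpose_mul_mul_exp hX, Real.exp_log hs]
  · rw [exp_transpose_mul_mul_exp hX', Real.exp_log hs']
end

section
/- Let k ≥ 3 and let λ_1 < λ_2 < ⋯ < λ_k be real numbers; take indices cyclically modulo k and write d_i = λ_{i+1} − λ_i and s_i = λ_{i+1} + λ_i. Then the following two inequalities hold: (a) Σ_{1 ≤ i ≠ j ≤ k} (s_i − s_j)² / (d_i·d_j) > 0; and (b) Σ_{i=1}^k (2 + s_i)² / d_i > 0. -/
/-!
Put `A = ∑ 1/dᵢ`, `B = ∑ sᵢ/dᵢ`, `C = ∑ sᵢ²/dᵢ`. The double sum in (a) equals `2(AC - B²)` and the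
sum in (b) is the value at `t = 2` of `Q(t) = ∑ (t + sᵢ)²/dᵢ = At² + 2Bt + C`, so both follow from
`A > 0` and `Q > 0` everywhere (negative discriminant).

Both `A = ∑ 1²/dᵢ` and `Q(t)` have the form `∑ aᵢ²/dᵢ` with `∑ aᵢdᵢ = 0`, since `∑ dᵢ = 0` and
`∑ sᵢdᵢ = ∑ (λᵢ₊₁² - λᵢ²) = 0`. Split off the only negative gap `d_k = -D`, `D = d_1 + ⋯ + d_{k-1}`.
Cauchy–Schwarz gives `(a_k D)² = (∑_{i<k} aᵢdᵢ)² ≤ (∑_{i<k} aᵢ²/dᵢ) ∑_{i<k} dᵢ³`, and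
`∑_{i<k} dᵢ³ < D³` as there are at least two positive gaps; hence `∑_{i<k} aᵢ²/dᵢ > a_k²/D` as soon
as some `aᵢ` with `i < k` is nonzero, which holds for `aᵢ = t + sᵢ` because `s` increases there.
-/

open Finset

lemma sum_sub_comp_add_eq_zero {ι M : Type*} [AddGroup ι] [Fintype ι] [AddCommGroup M]
    (c : ι) (f : ι → M) : ∑ i, (f (i + c) - f i) = 0 := by
  rw [sum_sub_distrib, sub_eq_zero]
  exact Equiv.sum_comp (Equiv.addRight c) f

section PositiveFamily

variable {ι : Type*} {T : Finset ι} {a d : ι → ℝ}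

lemma sum_pow_lt_pow_sum (hT : T.Nontrivial) (hd : ∀ i ∈ T, 0 < d i) {m : ℕ} (hm : 2 ≤ m) :
    ∑ i ∈ T, d i ^ m < (∑ i ∈ T, d i) ^ m := by
  set D := ∑ i ∈ T, d i
  have hlt : ∀ i ∈ T, d i < D := fun i hi => by
    obtain ⟨j, hj, hji⟩ := hT.exists_ne i
    exact single_lt_sum hji hi hj (hd j hj) fun l hl _ => (hd l hl).le
  obtain ⟨m, rfl⟩ : ∃ m', m = m' + 1 := ⟨m - 1, by omega⟩
  calc ∑ i ∈ T, d i ^ (m + 1) = ∑ i ∈ T, d i * d i ^ m := by simp only [pow_succ']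
    _ < ∑ i ∈ T, d i * D ^ m := sum_lt_sum_of_nonempty hT.nonempty fun i hi =>
        mul_lt_mul_of_pos_left (pow_lt_pow_left₀ (hlt i hi) (hd i hi).le (by omega)) (hd i hi)
    _ = D ^ (m + 1) := by rw [← sum_mul, pow_succ']

lemma sq_sum_mul_div_lt_sum_sq_div (hT : T.Nontrivial) (hd : ∀ i ∈ T, 0 < d i)
    (ha : ∃ i ∈ T, a i ≠ 0) :
    (∑ i ∈ T, a i * d i) ^ 2 / (∑ i ∈ T, d i) ^ 3 < ∑ i ∈ T, a i ^ 2 / d i := by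
  obtain ⟨i₀, hi₀, hai₀⟩ := ha
  have hX : 0 < ∑ i ∈ T, a i ^ 2 / d i :=
    sum_pos' (fun i hi => div_nonneg (sq_nonneg _) (hd i hi).le)
      ⟨i₀, hi₀, div_pos (pow_two_pos_of_ne_zero hai₀) (hd i₀ hi₀)⟩
  have hCS : (∑ i ∈ T, a i * d i) ^ 2 / ∑ i ∈ T, d i ^ 3 ≤ ∑ i ∈ T, a i ^ 2 / d i := by
    refine (sq_sum_div_le_sum_sq_div T _ fun i hi => pow_pos (hd i hi) 3).trans_eq
      (sum_congr rfl fun i hi => ?_)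
    field_simp [(hd i hi).ne']
  rw [div_le_iff₀ (sum_pos (fun i hi => pow_pos (hd i hi) 3) hT.nonempty)] at hCS
  rw [div_lt_iff₀ (pow_pos (sum_pos hd hT.nonempty) 3)]
  exact hCS.trans_lt (mul_lt_mul_of_pos_left (sum_pow_lt_pow_sum hT hd (by norm_num)) hX)

end PositiveFamily

lemma sum_add_sq_div {ι : Type*} (T : Finset ι) (t : ℝ) (s d : ι → ℝ) :
    ∑ i ∈ T, (t + s i) ^ 2 / d i
      = (∑ i ∈ T, 1 / d i) * (t * t) + 2 * (∑ i ∈ T, s i / d i) * t + ∑ i ∈ T, s i ^ 2 / d i := by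
  rw [sum_mul, mul_sum, sum_mul, ← sum_add_distrib, ← sum_add_distrib]
  exact sum_congr rfl fun i _ => by ring

lemma sum_sum_sub_sq_div_mul {ι : Type*} (T : Finset ι) (s d : ι → ℝ) :
    ∑ i ∈ T, ∑ j ∈ T, (s i - s j) ^ 2 / (d i * d j)
      = 2 * ((∑ i ∈ T, 1 / d i) * (∑ i ∈ T, s i ^ 2 / d i) - (∑ i ∈ T, s i / d i) ^ 2) := by
  have hexpand : ∀ i j, (s i - s j) ^ 2 / (d i * d j)
      = s i ^ 2 / d i * (1 / d j) + 1 / d i * (s j ^ 2 / d j) - 2 * (s i / d i * (s j / d j)) :=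
    fun i j => by ring
  simp only [hexpand, sum_add_distrib, sum_sub_distrib, ← mul_sum, ← sum_mul]
  ring

lemma sum_sq_div_pos_of_sum_mul_eq_zero {n : ℕ} (hn : 2 ≤ n) {lam : Fin (n + 1) → ℝ}
    (hlam : StrictMono lam) {d : Fin (n + 1) → ℝ} (hd : ∀ i, d i = lam (i + 1) - lam i)
    {a : Fin (n + 1) → ℝ} (had : ∑ i, a i * d i = 0) (ha : ∃ i : Fin n, a i.castSucc ≠ 0) :
    0 < ∑ i, a i ^ 2 / d i := by
  have hD : ∑ i : Fin n, d i.castSucc = -d (Fin.last n) := by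
    rw [eq_neg_iff_add_eq_zero, ← Fin.sum_univ_castSucc]
    simpa only [hd] using sum_sub_comp_add_eq_zero 1 lam
  have hgap : ∀ i ∈ (univ : Finset (Fin n)), 0 < d i.castSucc := fun i _ => by
    rw [hd, Fin.coeSucc_eq_succ, sub_pos]
    exact hlam i.castSucc_lt_succ
  have hL : ∑ i : Fin n, a i.castSucc * d i.castSucc = -(a (Fin.last n) * d (Fin.last n)) := by
    rw [eq_neg_iff_add_eq_zero, ← Fin.sum_univ_castSucc (fun i => a i * d i)]
    exact had
  have hT : (univ : Finset (Fin n)).Nontrivial :=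
    univ_nontrivial_iff.2 (Fin.nontrivial_iff_two_le.2 hn)
  have hlast : d (Fin.last n) ≠ 0 := by
    rw [← neg_ne_zero, ← hD]
    exact (sum_pos hgap hT.nonempty).ne'
  have key := sq_sum_mul_div_lt_sum_sq_div hT hgap (by simpa using ha)
  rw [hD, hL, neg_pow, neg_sq, mul_pow] at key
  rw [Fin.sum_univ_castSucc]
  field_simp at key
  linarith

lemma sum_one_div_pos_of_strictMono {n : ℕ} (hn : 2 ≤ n) {lam : Fin (n + 1) → ℝ}
    (hlam : StrictMono lam) {d : Fin (n + 1) → ℝ} (hd : ∀ i, d i = lam (i + 1) - lam i) :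
    0 < ∑ i, 1 / d i := by
  have hsum_d : ∑ i, d i = 0 := by simpa only [hd] using sum_sub_comp_add_eq_zero 1 lam
  simpa using sum_sq_div_pos_of_sum_mul_eq_zero hn hlam hd (a := 1) (by simpa using hsum_d)
    ⟨⟨0, by omega⟩, one_ne_zero⟩

lemma sum_add_sq_div_pos_of_strictMono {n : ℕ} (hn : 2 ≤ n) {lam : Fin (n + 1) → ℝ}
    (hlam : StrictMono lam) {d s : Fin (n + 1) → ℝ} (hd : ∀ i, d i = lam (i + 1) - lam i)
    (hs : ∀ i, s i = lam (i + 1) + lam i) (t : ℝ) :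
    0 < ∑ i, (t + s i) ^ 2 / d i := by
  have hsum_d : ∑ i, d i = 0 := by simpa only [hd] using sum_sub_comp_add_eq_zero 1 lam
  have hsum_sd : ∑ i, s i * d i = 0 := by
    rw [← sum_sub_comp_add_eq_zero 1 fun i => lam i ^ 2]
    exact sum_congr rfl fun i _ => by rw [hs, hd]; ring
  have hs_mono : StrictMono fun i : Fin n => t + s i.castSucc := by
    simp only [hs, Fin.coeSucc_eq_succ]
    exact ((hlam.comp Fin.strictMono_succ).add (hlam.comp Fin.strictMono_castSucc)).const_add t
  have := Fin.nontrivial_iff_two_le.2 hn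
  exact sum_sq_div_pos_of_sum_mul_eq_zero hn hlam hd
    (by simp only [add_mul t, sum_add_distrib, ← mul_sum, hsum_d, hsum_sd, mul_zero, add_zero])
    (hs_mono.injective.exists_ne 0)

/-- For `k ≥ 3` and `λ_1 < ⋯ < λ_k`, with cyclic differences
`d_i = λ_{i+1} - λ_i` and sums `s_i = λ_{i+1} + λ_i`, one has
`∑_{i ≠ j} (s_i - s_j)²/(d_i d_j) > 0` and `∑_i (2 + s_i)²/d_i > 0`. -/
theorem cyclic_difference_inequalities
    (k : ℕ) (hk : 3 ≤ k) (lam : Fin k → ℝ) (hmono : StrictMono lam)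
    (d s : Fin k → ℝ)
    (hd : ∀ i, d i = lam (i + ⟨1, by omega⟩) - lam i)
    (hs : ∀ i, s i = lam (i + ⟨1, by omega⟩) + lam i) :
    (0 < ∑ i : Fin k, ∑ j : Fin k,
        (if i = j then 0 else (s i - s j) ^ 2 / (d i * d j))) ∧
    (0 < ∑ i : Fin k, (2 + s i) ^ 2 / d i) := by
  obtain ⟨n, rfl⟩ : ∃ n, k = n + 1 := ⟨k - 1, by omega⟩
  have hn : 2 ≤ n := by omega
  have hone : (⟨1, by omega⟩ : Fin (n + 1)) = 1 := Fin.ext (Nat.mod_eq_of_lt (by omega)).symm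
  replace hd : ∀ i, d i = lam (i + 1) - lam i := by simpa only [hone] using hd
  replace hs : ∀ i, s i = lam (i + 1) + lam i := by simpa only [hone] using hs
  have hA := sum_one_div_pos_of_strictMono hn hmono hd
  have hQ := sum_add_sq_div_pos_of_strictMono hn hmono hd hs
  have hdisc := discrim_lt_zero hA.ne' fun t => sum_add_sq_div univ t s d ▸ hQ t
  refine ⟨?_, hQ 2⟩
  have hdiag : ∀ i j, (if i = j then 0 else (s i - s j) ^ 2 / (d i * d j))
      = (s i - s j) ^ 2 / (d i * d j) := fun i j => ite_eq_right_iff.2 fun h => by simp [h]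
  simp only [hdiag, sum_sum_sub_sq_div_mul, discrim] at hdisc ⊢
  linarith
end

section
/- Let n ≥ 2, t ∈ (0,1), and L ≥ 1 be real numbers, let I be a subset of {1, …, n}, and let x_1, …, x_n be positive real numbers with x_1·⋯·x_n = 1 such that: 0 < x_i < 1 for every i ∈ I, x_i > 1 for every i ∉ I, I is nonempty and proper, min_{1≤i≤n} |log x_i| ≥ t · max_{1≤i≤n} |log x_i|, and Σ_{i=1}^n x_i ≥ L. Then for every i ∈ I and every j ∉ I, |x_i^{−1} − 1| ≥ t·((L − 1)/(n − 1))^t · |x_j^{−1} − 1|. -/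
/-!
Let `M` be the largest entry. Since some entry is below `1`, the sum bound gives
`(L - 1)/(n - 1) ≤ M`. The chamber condition against the largest entry gives `M ^ t ≤ xᵢ⁻¹`,
and Bernoulli's inequality for `M⁻¹ ^ t` turns `M ^ t - 1` into at least `t M ^ t (1 - M⁻¹)`,
which dominates `t ((L - 1)/(n - 1)) ^ t (1 - xⱼ⁻¹)` because `xⱼ ≤ M`.
-/

open Real Finset

theorem sum_le_add_card_sub_one_mul {ι : Type*} [Fintype ι] {f : ι → ℝ} {M : ℝ}
    (hf : ∀ m, f m ≤ M) (i : ι) :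
    ∑ m, f m ≤ f i + ((Fintype.card ι : ℝ) - 1) * M := by
  classical
  rw [← add_sum_erase _ _ (mem_univ i)]
  have hcard : ((univ.erase i).card : ℝ) = (Fintype.card ι : ℝ) - 1 := by
    rw [card_erase_of_mem (mem_univ i), card_univ,
      Nat.cast_sub (Fintype.card_pos_iff.mpr ⟨i⟩), Nat.cast_one]
  have := sum_le_card_nsmul (univ.erase i) f M fun m _ => hf m
  rw [nsmul_eq_mul, hcard] at this
  linarith

theorem Real.mul_rpow_mul_one_sub_inv_le_rpow_sub_one {M t : ℝ} (hM : 0 < M)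
    (ht0 : 0 ≤ t) (ht1 : t ≤ 1) : t * M ^ t * (1 - M⁻¹) ≤ M ^ t - 1 := by
  have hbernoulli : M⁻¹ ^ t ≤ 1 + t * (M⁻¹ - 1) := by
    simpa using rpow_one_add_le_one_add_mul_self
      (by linarith [inv_pos.mpr hM] : (-1 : ℝ) ≤ M⁻¹ - 1) ht0 ht1
  have hcancel : M ^ t * M⁻¹ ^ t = 1 := by
    rw [← mul_rpow hM.le (inv_nonneg.mpr hM.le), mul_inv_cancel₀ hM.ne', one_rpow]
  have := mul_le_mul_of_nonneg_left hbernoulli (rpow_pos_of_pos hM t).le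
  rw [hcancel] at this
  linarith

theorem truncated_chamber_entry_ratio_bound_general
    (n : ℕ) (hn : 2 ≤ n) (t L : ℝ) (ht0 : 0 < t) (ht1 : t < 1) (hL : 1 ≤ L)
    (I : Set (Fin n)) (x : Fin n → ℝ)
    (hxpos : ∀ i, 0 < x i)
    (hxI : ∀ i ∈ I, x i < 1) (hxIc : ∀ i ∉ I, 1 < x i)
    (hchamber : ∀ i j : Fin n, |Real.log (x i)| ≥ t * |Real.log (x j)|)
    (hsum : L ≤ ∑ i, x i) :
    ∀ i ∈ I, ∀ j ∉ I,
      |(x i)⁻¹ - 1| ≥ t * ((L - 1) / ((n : ℝ) - 1)) ^ t * |(x j)⁻¹ - 1| := by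
  intro i hi j hj
  have : Nonempty (Fin n) := ⟨i⟩
  obtain ⟨k, hk⟩ := Finite.exists_max x
  have hk1 : 1 < x k := (hxIc j hj).trans_le (hk j)
  have hk0 : 0 < x k := one_pos.trans hk1
  have hn1 : (0 : ℝ) < n - 1 := by
    have : (2 : ℝ) ≤ n := by exact_mod_cast hn
    linarith
  have hratio_le : (L - 1) / ((n : ℝ) - 1) ≤ x k := by
    have := sum_le_add_card_sub_one_mul hk i
    rw [Fintype.card_fin] at this
    rw [div_le_iff₀ hn1]
    linarith [hxI i hi]
  have hrpow_le : x k ^ t ≤ (x i)⁻¹ := by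
    have := hchamber i k
    rw [abs_of_neg (log_neg (hxpos i) (hxI i hi)), abs_of_pos (log_pos hk1)] at this
    rw [rpow_le_iff_le_log hk0 (inv_pos.mpr (hxpos i)), log_inv]
    linarith
  rw [abs_of_pos (sub_pos.mpr (one_lt_inv_iff₀.mpr ⟨hxpos i, hxI i hi⟩)),
    abs_of_neg (sub_neg.mpr (inv_lt_one_of_one_lt₀ (hxIc j hj))), neg_sub, ge_iff_le]
  calc t * ((L - 1) / ((n : ℝ) - 1)) ^ t * (1 - (x j)⁻¹)
      ≤ t * x k ^ t * (1 - (x k)⁻¹) := by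
        gcongr
        exacts [sub_nonneg.mpr (inv_le_one_of_one_le₀ (hxIc j hj).le), hxpos j, hk j]
    _ ≤ x k ^ t - 1 := mul_rpow_mul_one_sub_inv_le_rpow_sub_one hk0 ht0.le ht1.le
    _ ≤ (x i)⁻¹ - 1 := by linarith

/-- For a point `diag(x_1, …, x_n)` of the model flat lying in the
truncated chamber `Δ^I_t` with Selberg invariant at least `L` from the identity, one has
`|x_i⁻¹ - 1| ≥ t·((L-1)/(n-1))^t · |x_j⁻¹ - 1|` for all `i ∈ I`, `j ∉ I`. -/
theorem truncated_chamber_entry_ratio_bound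
    (n : ℕ) (hn : 2 ≤ n) (t L : ℝ) (ht0 : 0 < t) (ht1 : t < 1) (hL : 1 ≤ L)
    (I : Set (Fin n)) (x : Fin n → ℝ)
    (hxpos : ∀ i, 0 < x i) (hprod : ∏ i, x i = 1)
    (hxI : ∀ i ∈ I, x i < 1) (hxIc : ∀ i ∉ I, 1 < x i)
    (hIne : I.Nonempty) (hIproper : I ≠ Set.univ)
    (hchamber : ∀ i j : Fin n, |Real.log (x i)| ≥ t * |Real.log (x j)|)
    (hsum : L ≤ ∑ i, x i) :
    ∀ i ∈ I, ∀ j ∉ I,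
      |(x i)⁻¹ - 1| ≥ t * ((L - 1) / ((n : ℝ) - 1)) ^ t * |(x j)⁻¹ - 1| :=
  truncated_chamber_entry_ratio_bound_general n hn t L ht0 ht1 hL I x hxpos hxI hxIc hchamber hsum
end

section
/- Let γ be the 3×3 real matrix with rows (1,1,0), (0,1,0), (0,0,1) (a unipotent element of SL(3,ℝ)). For every X ∈ 𝒫(3), every A ∈ 𝒫(3), and every integer k₀: if s(γᵏ.X, A) ≥ s(X, A) for all integers k, and s(γ^{k₀}.X, A) = s(X, A), then k₀ ∈ {−1, 0, 1}. (Hence the Dirichlet–Selberg domain of the cyclic group generated by γ centered at any X ∈ 𝒫(3) has at most two facets.) -/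
/-!
The powers `γᵏ = shear k` lie in a one-parameter unipotent group, and
`s(shear t.X, A) = tr(shear(-t) X⁻¹ shear(-t)ᵀ A)` is a quadratic `s(X, A) - b t + a t²`
whose leading coefficient `a = (X⁻¹)₁₁ A₀₀` is positive. Minimality at `k = 0` against `k = ±1` gives
`|b| ≤ a`, while a second integer minimiser `k₀ ≠ 0` is a root of `a k - b`, so `|k₀| ≤ 1`.
-/

open Matrix

namespace Stmt14

/-- Membership in `𝒫(3)`: symmetric positive definite of determinant 1. -/
def PD3 (X : Matrix (Fin 3) (Fin 3) ℝ) : Prop := X.PosDef ∧ X.det = 1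

/-- Selberg's invariant `s(X,Y) = tr(X⁻¹·Y)`. -/
noncomputable def sel (X Y : Matrix (Fin 3) (Fin 3) ℝ) : ℝ := (X⁻¹ * Y).trace

/-- The action `g.X = gᵀ·X·g`. -/
def act (g X : Matrix (Fin 3) (Fin 3) ℝ) : Matrix (Fin 3) (Fin 3) ℝ := gᵀ * X * g

/-- The unipotent element `γ` with rows `(1,1,0), (0,1,0), (0,0,1)`, as a unit of the
matrix ring (so that integer powers are available). -/
def gam : (Matrix (Fin 3) (Fin 3) ℝ)ˣ :=
  ⟨!![1, 1, 0; 0, 1, 0; 0, 0, 1], !![1, -1, 0; 0, 1, 0; 0, 0, 1],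
    by simp [Matrix.mul_fin_three, Matrix.one_fin_three],
    by simp [Matrix.mul_fin_three, Matrix.one_fin_three]⟩

def shear (t : ℝ) : Matrix (Fin 3) (Fin 3) ℝ := !![1, t, 0; 0, 1, 0; 0, 0, 1]

lemma shear_mul_shear (s t : ℝ) : shear s * shear t = shear (s + t) := by
  simp [shear, add_comm]

lemma shear_transpose (t : ℝ) : (shear t)ᵀ = !![1, 0, 0; t, 1, 0; 0, 0, 1] := by
  ext i j
  fin_cases i <;> fin_cases j <;> rfl

lemma shear_zero : shear 0 = 1 := by
  simp [shear, one_fin_three]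

lemma shear_inv (t : ℝ) : (shear t)⁻¹ = shear (-t) :=
  inv_eq_right_inv (by rw [shear_mul_shear, add_neg_cancel, shear_zero])

lemma val_gam_zpow (k : ℤ) : ((gam ^ k : (Matrix (Fin 3) (Fin 3) ℝ)ˣ) : Matrix (Fin 3) (Fin 3) ℝ)
    = shear k := by
  induction k using Int.induction_on with
  | zero => simp [shear_zero]
  | succ n ih =>
    rw [_root_.zpow_add_one, Units.val_mul, ih,
      show (gam : Matrix (Fin 3) (Fin 3) ℝ) = shear 1 from rfl, shear_mul_shear]
    push_cast; rfl
  | pred n ih =>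
    rw [_root_.zpow_sub_one, Units.val_mul, ih,
      show ((gam⁻¹ : (Matrix (Fin 3) (Fin 3) ℝ)ˣ) : Matrix (Fin 3) (Fin 3) ℝ) = shear (-1) from rfl,
      shear_mul_shear]
    push_cast; ring_nf

lemma sel_act_shear (X A : Matrix (Fin 3) (Fin 3) ℝ) (t : ℝ) :
    sel (act (shear t) X) A
      = sel X A - t * ((X⁻¹ * A) 1 0 + (A * X⁻¹) 0 1) + t ^ 2 * (X⁻¹ 1 1 * A 0 0) := by
  have hinv : (act (shear t) X)⁻¹ = shear (-t) * X⁻¹ * (shear (-t))ᵀ := by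
    rw [act, Matrix.mul_inv_rev, Matrix.mul_inv_rev, ← transpose_nonsing_inv, shear_inv,
      Matrix.mul_assoc]
  rw [sel, sel, hinv, shear_transpose]
  simp [shear, trace_fin_three, mul_apply, Fin.sum_univ_three, vecMul, dotProduct]
  ring

lemma eq_neg_one_or_zero_or_one_of_mul_sq_eq {a b : ℝ} (ha : 0 < a) (hb : |b| ≤ a) {k : ℤ}
    (hk : a * k ^ 2 = b * k) : k = -1 ∨ k = 0 ∨ k = 1 := by
  rcases eq_or_ne k 0 with rfl | hk0
  · simp
  have hak : a * k = b :=
    mul_right_cancel₀ (Int.cast_ne_zero.mpr hk0) (by linear_combination hk)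
  have habs : a * |(k : ℝ)| ≤ a * 1 := by
    rwa [mul_one, ← abs_of_pos ha, ← abs_mul, abs_of_pos ha, hak]
  have : |k| ≤ 1 := by exact_mod_cast le_of_mul_le_mul_left habs ha
  rcases Int.abs_le_one_iff.mp this with h | h | h <;> simp [h]

/-- if the Selberg invariant `s(γᵏ.X, A)` is minimized over `k ∈ ℤ` at
`k = 0` and also attains this minimum at `k₀`, then `k₀ ∈ {-1, 0, 1}`; hence the
Dirichlet–Selberg domain of `⟨γ⟩` has at most two facets. -/
theorem cyclic_type_one_at_most_two_facets
    (X A : Matrix (Fin 3) (Fin 3) ℝ) (hX : PD3 X) (hA : PD3 A) (k₀ : ℤ)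
    (hmin : ∀ k : ℤ, sel X A ≤ sel (act (↑(gam ^ k)) X) A)
    (heq : sel (act (↑(gam ^ k₀)) X) A = sel X A) :
    k₀ = -1 ∨ k₀ = 0 ∨ k₀ = 1 := by
  set a := X⁻¹ 1 1 * A 0 0
  set b := (X⁻¹ * A) 1 0 + (A * X⁻¹) 0 1
  have horbit (k : ℤ) : sel (act (↑(gam ^ k)) X) A = sel X A - k * b + k ^ 2 * a := by
    rw [val_gam_zpow, sel_act_shear]
  have ha : 0 < a := mul_pos (hX.1.inv.diag_pos) hA.1.diag_pos
  have h₁ := hmin 1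
  have h₂ := hmin (-1)
  rw [horbit] at h₁ h₂ heq
  norm_num at h₁ h₂
  have hb : |b| ≤ a := abs_le.mpr ⟨by linarith, by linarith⟩
  exact eq_neg_one_or_zero_or_one_of_mul_sq_eq ha hb (by linear_combination heq)

end Stmt14
end

section
/- Let γ be the 3×3 real matrix with rows (1,1,0), (0,1,1), (0,0,1) (a unipotent element of SL(3,ℝ) whose eigenvalue 1 has geometric multiplicity 1). For every X ∈ 𝒫(3) and every nonzero integer k₀ there exists A ∈ 𝒫(3) such that s(γ^{k₀}.X, A) = s(X, A) and s(γᵏ.X, A) > s(X, A) for every integer k ∉ {0, k₀}. (Hence the Dirichlet–Selberg domain of the cyclic group generated by γ centered at any X ∈ 𝒫(3) is infinitely-sided.) -/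
/-!
By invariance, `sel (γᵏ.X) A = tr (X⁻¹ · γ⁻ᵏ.A)`, and the entries of `γᵏ` are polynomials of
degree at most 2 in `k`; so `k ↦ sel (γᵏ.X) A` is a quartic polynomial with leading coefficient
`y₃₃ a₁₁ / 4`, where `y = X⁻¹`. For `A = L Lᵀ` with `L` lower unitriangular, the coefficients of
`k³`, `k²`, `k` are affine in the three free entries of `L`, each new entry entering with the pivot
`y₃₃ > 0`, so they can be prescribed one after the other. Prescribing them so that
`sel (γᵏ.X) A - sel X A = y₃₃ / 4 · (k (k - k₀))²` gives equality at `k₀` and strict inequality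
off `{0, k₀}`.
-/

open Matrix

namespace Stmt15

/-- Membership in `𝒫(3)`: symmetric positive definite of determinant 1. -/
def PD3 (X : Matrix (Fin 3) (Fin 3) ℝ) : Prop := X.PosDef ∧ X.det = 1

/-- Selberg's invariant `s(X,Y) = tr(X⁻¹·Y)`. -/
noncomputable def sel (X Y : Matrix (Fin 3) (Fin 3) ℝ) : ℝ := (X⁻¹ * Y).trace

/-- The action `g.X = gᵀ·X·g`. -/
def act (g X : Matrix (Fin 3) (Fin 3) ℝ) : Matrix (Fin 3) (Fin 3) ℝ := gᵀ * X * g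

/-- The unipotent element `γ` with rows `(1,1,0), (0,1,1), (0,0,1)` (geometric
multiplicity 1 for the eigenvalue 1), as a unit of the matrix ring. -/
def gam : (Matrix (Fin 3) (Fin 3) ℝ)ˣ :=
  ⟨!![1, 1, 0; 0, 1, 1; 0, 0, 1], !![1, -1, 1; 0, 1, -1; 0, 0, 1],
    by simp [Matrix.mul_fin_three, Matrix.one_fin_three],
    by simp [Matrix.mul_fin_three, Matrix.one_fin_three]⟩

theorem sel_act (g : (Matrix (Fin 3) (Fin 3) ℝ)ˣ) (X A : Matrix (Fin 3) (Fin 3) ℝ) :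
    sel (act ↑g X) A = sel X (act ↑g⁻¹ A) := by
  rw [sel, sel, act, act, Matrix.mul_inv_rev, Matrix.mul_inv_rev, ← transpose_nonsing_inv,
    ← coe_units_inv, mul_assoc, mul_assoc, trace_mul_comm, mul_assoc, mul_assoc]

theorem gam_zpow (k : ℤ) :
    (↑(gam ^ k) : Matrix (Fin 3) (Fin 3) ℝ) =
      !![1, (k : ℝ), k * (k - 1) / 2; 0, 1, k; 0, 0, 1] := by
  induction k using Int.induction_on with
  | zero => simp [one_fin_three]
  | succ n ih =>
    rw [_root_.zpow_add_one, Units.val_mul, ih]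
    ext i j; fin_cases i <;> fin_cases j <;> simp [gam] <;> ring
  | pred n ih =>
    rw [_root_.zpow_sub_one, Units.val_mul, ih]
    ext i j; fin_cases i <;> fin_cases j <;> simp [gam] <;> ring

def lowerUnitriangular (a c b : ℝ) : Matrix (Fin 3) (Fin 3) ℝ := !![1, 0, 0; a, 1, 0; c, b, 1]

theorem PD3_lowerUnitriangular_mul_transpose (a c b : ℝ) :
    PD3 (lowerUnitriangular a c b * (lowerUnitriangular a c b)ᵀ) := by
  have hdet : (lowerUnitriangular a c b).det = 1 := by
    simp [lowerUnitriangular, det_fin_three]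
  refine ⟨?_, by rw [det_mul, det_transpose, hdet, one_mul]⟩
  rw [← conjTranspose_eq_transpose_of_trivial]
  exact PosDef.mul_conjTranspose_self _ <| vecMul_injective_of_isUnit <|
    (isUnit_iff_isUnit_det _).mpr (hdet ▸ isUnit_one)

theorem lowerUnitriangular_mul_transpose (a c b : ℝ) :
    lowerUnitriangular a c b * (lowerUnitriangular a c b)ᵀ =
      !![1, a, c; a, a ^ 2 + 1, a * c + b; c, a * c + b, c ^ 2 + b ^ 2 + 1] := by
  ext i j
  fin_cases i <;> fin_cases j <;> simp [lowerUnitriangular, mul_apply, Fin.sum_univ_three] <;> ring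

theorem trace_mul_act_gam_zpow (Y : Matrix (Fin 3) (Fin 3) ℝ) (hY : Y.IsSymm) (a c b : ℝ)
    (k : ℤ) :
    (Y * act ↑(gam ^ k) (lowerUnitriangular a c b * (lowerUnitriangular a c b)ᵀ)).trace =
      (Y * (lowerUnitriangular a c b * (lowerUnitriangular a c b)ᵀ)).trace + Y 2 2 / 4 * k ^ 4
      + (Y 2 2 * a + Y 1 2 - Y 2 2 / 2) * k ^ 3
      + (Y 2 2 * c + Y 0 2 + Y 1 1 - Y 1 2 + Y 2 2 / 4 + (a ^ 2 + 1) * Y 2 2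
          + a * (3 * Y 1 2 - Y 2 2)) * k ^ 2
      + (2 * Y 2 2 * b + 2 * Y 0 1 - Y 0 2 + 2 * (a ^ 2 + 1) * Y 1 2
          + a * (2 * Y 0 2 + 2 * Y 1 1 - Y 1 2) + c * (2 * Y 1 2 - Y 2 2)
          + 2 * a * c * Y 2 2) * k := by
  rw [act, gam_zpow, lowerUnitriangular_mul_transpose, eta_fin_three Y,
    ← hY.apply 0 1, ← hY.apply 0 2, ← hY.apply 1 2]
  simp only [trace_fin_three, mul_apply, of_apply, Fin.sum_univ_three, transpose_apply, cons_val',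
    cons_val_zero, cons_val_one, head_cons, empty_val', cons_val_fin_one, head_fin_const,
    cons_val_two, tail_cons]
  ring

theorem exists_trace_mul_act_gam_zpow_eq (Y : Matrix (Fin 3) (Fin 3) ℝ) (hY : Y.IsSymm)
    (hY₂₂ : Y 2 2 ≠ 0) (β₃ β₂ β₁ : ℝ) :
    ∃ a c b : ℝ, ∀ k : ℤ,
      (Y * act ↑(gam ^ k) (lowerUnitriangular a c b * (lowerUnitriangular a c b)ᵀ)).trace =
        (Y * (lowerUnitriangular a c b * (lowerUnitriangular a c b)ᵀ)).trace
          + Y 2 2 / 4 * k ^ 4 + β₃ * k ^ 3 + β₂ * k ^ 2 + β₁ * k := by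
  have solve (p q r : ℝ) (hp : p ≠ 0) : ∃ x, p * x + q = r :=
    ⟨(r - q) / p, by field_simp; ring⟩
  obtain ⟨a, ha⟩ := solve (Y 2 2) (Y 1 2 - Y 2 2 / 2) β₃ hY₂₂
  obtain ⟨c, hc⟩ := solve (Y 2 2) (Y 0 2 + Y 1 1 - Y 1 2 + Y 2 2 / 4 + (a ^ 2 + 1) * Y 2 2
    + a * (3 * Y 1 2 - Y 2 2)) β₂ hY₂₂
  obtain ⟨b, hb⟩ := solve (2 * Y 2 2) (2 * Y 0 1 - Y 0 2 + 2 * (a ^ 2 + 1) * Y 1 2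
    + a * (2 * Y 0 2 + 2 * Y 1 1 - Y 1 2) + c * (2 * Y 1 2 - Y 2 2) + 2 * a * c * Y 2 2) β₁
    (mul_ne_zero two_ne_zero hY₂₂)
  refine ⟨a, c, b, fun k => ?_⟩
  rw [trace_mul_act_gam_zpow Y hY]
  linear_combination (k : ℝ) ^ 3 * ha + (k : ℝ) ^ 2 * hc + (k : ℝ) * hb

theorem cyclic_type_two_infinitely_sided_general
    (X : Matrix (Fin 3) (Fin 3) ℝ) (hX : PD3 X) (k₀ : ℤ) :
    ∃ A : Matrix (Fin 3) (Fin 3) ℝ, PD3 A ∧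
      sel (act (↑(gam ^ k₀)) X) A = sel X A ∧
      ∀ k : ℤ, k ≠ 0 → k ≠ k₀ → sel X A < sel (act (↑(gam ^ k)) X) A := by
  have hY : X⁻¹.PosDef := hX.1.inv
  have hY₂₂ : 0 < X⁻¹ 2 2 := hY.diag_pos
  obtain ⟨a, c, b, hpoly⟩ := exists_trace_mul_act_gam_zpow_eq X⁻¹
    (by rw [IsSymm, ← conjTranspose_eq_transpose_of_trivial]; exact hY.isHermitian)
    hY₂₂.ne' (X⁻¹ 2 2 * k₀ / 2) (X⁻¹ 2 2 * k₀ ^ 2 / 4) 0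
  set A := lowerUnitriangular a c b * (lowerUnitriangular a c b)ᵀ
  have hsel (k : ℤ) :
      sel (act ↑(gam ^ k) X) A = sel X A + X⁻¹ 2 2 / 4 * (k * (k - k₀)) ^ 2 := by
    rw [sel_act, ← _root_.zpow_neg, sel, sel, hpoly (-k)]
    push_cast
    ring
  refine ⟨A, PD3_lowerUnitriangular_mul_transpose a c b, by rw [hsel]; simp, fun k hk hkk => ?_⟩
  have hne : (k * (k - k₀) : ℝ) ≠ 0 := by exact_mod_cast mul_ne_zero hk (sub_ne_zero.mpr hkk)
  rw [hsel]
  exact lt_add_of_pos_right _ (by positivity)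

/-- for every `X ∈ 𝒫(3)` and every nonzero integer `k₀` there exists
`A ∈ 𝒫(3)` whose Selberg invariant to the orbit `γᵏ.X` is minimized exactly at
`k ∈ {0, k₀}`; hence `DS(X, ⟨γ⟩)` is infinitely-sided. -/
theorem cyclic_type_two_infinitely_sided
    (X : Matrix (Fin 3) (Fin 3) ℝ) (hX : PD3 X) (k₀ : ℤ) (hk₀ : k₀ ≠ 0) :
    ∃ A : Matrix (Fin 3) (Fin 3) ℝ, PD3 A ∧
      sel (act (↑(gam ^ k₀)) X) A = sel X A ∧
      ∀ k : ℤ, k ≠ 0 → k ≠ k₀ → sel X A < sel (act (↑(gam ^ k)) X) A :=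
  cyclic_type_two_infinitely_sided_general X hX k₀

end Stmt15
end

section
/- Let s ≠ 0 be a real number and let γ = diag(e^s, e^{−s}, 1) ∈ SL(3,ℝ). Let X ∈ 𝒫(3) satisfy (X⁻¹)₁₃ ≠ 0 and (X⁻¹)₂₃ ≠ 0. Then for every nonzero integer k₀ there exists A ∈ 𝒫(3) such that s(γ^{k₀}.X, A) = s(X, A) and s(γᵏ.X, A) > s(X, A) for every integer k ∉ {0, k₀}. (Hence the Dirichlet–Selberg domain of the cyclic group generated by γ centered at such X is infinitely-sided.) -/
open Matrix Real

namespace Stmt16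

/-- Membership in `𝒫(3)`: symmetric positive definite of determinant 1. -/
def PD3 (X : Matrix (Fin 3) (Fin 3) ℝ) : Prop := X.PosDef ∧ X.det = 1

/-- Selberg's invariant `s(X,Y) = tr(X⁻¹·Y)`. -/
noncomputable def sel (X Y : Matrix (Fin 3) (Fin 3) ℝ) : ℝ := (X⁻¹ * Y).trace

/-- The action `g.X = gᵀ·X·g`. -/
def act (g X : Matrix (Fin 3) (Fin 3) ℝ) : Matrix (Fin 3) (Fin 3) ℝ := gᵀ * X * g

/-- The diagonal element `γ = diag(e^s, e^{-s}, 1)`, as a unit of the matrix ring. -/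
noncomputable def gam (s : ℝ) : (Matrix (Fin 3) (Fin 3) ℝ)ˣ :=
  ⟨!![Real.exp s, 0, 0; 0, Real.exp (-s), 0; 0, 0, 1],
    !![Real.exp (-s), 0, 0; 0, Real.exp s, 0; 0, 0, 1],
    by simp [Matrix.mul_fin_three, Matrix.one_fin_three, ← Real.exp_add],
    by simp [Matrix.mul_fin_three, Matrix.one_fin_three, ← Real.exp_add]⟩

/-! Write `B = X⁻¹` and `v = e^{ks}`. As `γᵏ` is diagonal, `s(γᵏ.X, A) = Σᵢⱼ wᵢ wⱼ Bᵢⱼ Aⱼᵢ` with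
`w = (v⁻¹, v, 1)`, a Laurent polynomial in `v`. Taking `A₀₁ = 0` and prescribing `B₀₀A₀₀ = u²`,
`B₁₁A₁₁ = 1`, `B₀₂A₀₂ = -u(1+u)`, `B₁₂A₁₂ = -(1+u)` (possible as `B₀₂, B₁₂ ≠ 0`) with
`u = e^{k₀s}` makes `s(γᵏ.X, A) - s(X, A) = ((v-1)(v-u))² / v²`, which vanishes exactly for
`k ∈ {0, k₀}`. Such an `A` is `Uᵀ diag(α, β, 1/(αβ)) U` with `U` unipotent, so it lies in `𝒫(3)`;
its entry `A₂₂`, forced by `det A = 1`, enters `s(γᵏ.X, A)` only through the constant `B₂₂A₂₂`. -/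

lemma coe_gam (t : ℝ) : (gam t : Matrix (Fin 3) (Fin 3) ℝ) = diagonal ![exp t, exp (-t), 1] := by
  ext i j
  fin_cases i <;> fin_cases j <;> rfl

lemma transpose_gam (t : ℝ) : (gam t : Matrix (Fin 3) (Fin 3) ℝ)ᵀ = gam t := by
  rw [coe_gam, diagonal_transpose]

lemma gam_mul (a b : ℝ) : gam a * gam b = gam (a + b) := by
  ext1
  simp only [Units.val_mul, coe_gam, diagonal_mul_diagonal]
  congr 1
  funext i
  fin_cases i <;> simp [← exp_add, add_comm]

lemma gam_zero : gam 0 = 1 := by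
  ext1
  simp only [coe_gam, exp_zero, neg_zero, Units.val_one, ← diagonal_one]
  congr 1
  funext i
  fin_cases i <;> rfl

lemma gam_inv (a : ℝ) : (gam a)⁻¹ = gam (-a) :=
  inv_eq_of_mul_eq_one_right (by rw [gam_mul, add_neg_cancel, gam_zero])

lemma gam_zpow (s : ℝ) (k : ℤ) : gam s ^ k = gam (k * s) := by
  induction k using Int.induction_on with
  | zero => simp [gam_zero]
  | succ n ih => rw [_root_.zpow_add_one, ih, gam_mul]; push_cast; ring_nf
  | pred n ih => rw [_root_.zpow_sub_one, ih, gam_inv, gam_mul]; push_cast; ring_nf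

lemma sel_act_gam (t : ℝ) (X A : Matrix (Fin 3) (Fin 3) ℝ) :
    sel (act (gam t) X) A =
      ∑ i, ∑ j, ![exp (-t), exp t, 1] i * ![exp (-t), exp t, 1] j * X⁻¹ i j * A j i := by
  rw [sel, act, transpose_gam, Matrix.mul_inv_rev, Matrix.mul_inv_rev, ← coe_units_inv, gam_inv,
    coe_gam, neg_neg, ← Matrix.mul_assoc, trace]
  simp only [diag, mul_apply (M := _ * _) (N := A), diagonal_mul, mul_diagonal]
  exact Finset.sum_congr rfl fun i _ => Finset.sum_congr rfl fun j _ => by ring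

lemma PD3.act {X : Matrix (Fin 3) (Fin 3) ℝ} (hX : PD3 X) {g : Matrix (Fin 3) (Fin 3) ℝ}
    (hg : g.det = 1) : PD3 (act g X) := by
  refine ⟨?_, by simp [Stmt16.act, det_mul, hX.2, hg]⟩
  simpa [Stmt16.act, conjTranspose_eq_transpose_of_trivial] using
    hX.1.conjTranspose_mul_mul_same (mulVec_injective_of_det_ne_zero (by simp [hg]))

lemma pd3_diagonal {α β : ℝ} (hα : 0 < α) (hβ : 0 < β) : PD3 (diagonal ![α, β, (α * β)⁻¹]) := by
  refine ⟨posDef_diagonal_iff.2 fun i => ?_, ?_⟩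
  · fin_cases i <;> simp [hα, hβ]
  · rw [det_diagonal, Fin.prod_univ_three]
    exact mul_inv_cancel₀ (mul_pos hα hβ).ne'

def unipotent (a b : ℝ) : Matrix (Fin 3) (Fin 3) ℝ := !![1, 0, a; 0, 1, b; 0, 0, 1]

lemma det_unipotent (a b : ℝ) : (unipotent a b).det = 1 := by
  simp [unipotent, det_fin_three]

noncomputable def testMatrix (α β a b : ℝ) : Matrix (Fin 3) (Fin 3) ℝ :=
  act (unipotent a b) (diagonal ![α, β, (α * β)⁻¹])

lemma pd3_testMatrix {α β : ℝ} (hα : 0 < α) (hβ : 0 < β) (a b : ℝ) : PD3 (testMatrix α β a b) :=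
  (pd3_diagonal hα hβ).act (det_unipotent a b)

lemma transpose_unipotent (a b : ℝ) : (unipotent a b)ᵀ = !![1, 0, 0; 0, 1, 0; a, b, 1] := by
  ext i j
  fin_cases i <;> fin_cases j <;> rfl

lemma testMatrix_eq (α β a b : ℝ) :
    testMatrix α β a b =
      !![α, 0, α * a; 0, β, β * b; α * a, β * b, α * a ^ 2 + β * b ^ 2 + (α * β)⁻¹] := by
  rw [testMatrix, act, transpose_unipotent, unipotent, diagonal_vec3, mul_fin_three, mul_fin_three]
  ring_nf

lemma sel_act_gam_sub_sel {X : Matrix (Fin 3) (Fin 3) ℝ} (hX : X⁻¹.IsSymm) {u α β a b : ℝ}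
    (hα : X⁻¹ 0 0 * α = u ^ 2) (hβ : X⁻¹ 1 1 * β = 1)
    (ha : X⁻¹ 0 2 * α * a = -(u * (1 + u))) (hb : X⁻¹ 1 2 * β * b = -(1 + u)) (t : ℝ) :
    sel (act (gam t) X) (testMatrix α β a b) - sel X (testMatrix α β a b) =
      ((exp t - 1) * (exp t - u)) ^ 2 / exp t ^ 2 := by
  have hX0 := sel_act_gam 0 X (testMatrix α β a b)
  rw [show act (gam 0) X = X by simp [act, gam_zero]] at hX0
  rw [hX0, sel_act_gam, testMatrix_eq]
  simp only [Fin.sum_univ_three, of_apply, cons_val', cons_val_zero, cons_val_one, cons_val,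
    cons_val_fin_one, hX.apply 0 2, hX.apply 1 2, neg_zero, exp_zero, exp_neg]
  field_simp
  linear_combination (1 - exp t ^ 2) * hα + (exp t ^ 4 - exp t ^ 2) * hβ
    + (2 * exp t - 2 * exp t ^ 2) * ha + (2 * exp t ^ 3 - 2 * exp t ^ 2) * hb

lemma exp_intCast_mul_injective {s : ℝ} (hs : s ≠ 0) : Function.Injective fun k : ℤ => exp (k * s) :=
  fun _ _ h => Int.cast_injective (mul_right_cancel₀ hs (exp_injective h))

theorem cyclic_type_three_prime_infinitely_sided_general
    (s : ℝ) (hs : s ≠ 0)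
    (X : Matrix (Fin 3) (Fin 3) ℝ) (hX : PD3 X)
    (h13 : (X⁻¹) 0 2 ≠ 0) (h23 : (X⁻¹) 1 2 ≠ 0)
    (k₀ : ℤ) :
    ∃ A : Matrix (Fin 3) (Fin 3) ℝ, PD3 A ∧
      sel (act (↑(gam s ^ k₀)) X) A = sel X A ∧
      ∀ k : ℤ, k ≠ 0 → k ≠ k₀ → sel X A < sel (act (↑(gam s ^ k)) X) A := by
  have hB := hX.1.inv
  set u := exp (k₀ * s)
  set α := u ^ 2 / X⁻¹ 0 0
  set β := 1 / X⁻¹ 1 1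
  have hα : 0 < α := div_pos (by positivity) hB.diag_pos
  have hβ : 0 < β := one_div_pos.2 hB.diag_pos
  set a := -(u * (1 + u)) / (X⁻¹ 0 2 * α)
  set b := -(1 + u) / (X⁻¹ 1 2 * β)
  have hdiff := sel_act_gam_sub_sel (isHermitian_iff_isSymm.1 hB.isHermitian)
    (mul_div_cancel₀ _ hB.diag_pos.ne') (mul_one_div_cancel hB.diag_pos.ne')
    (mul_div_cancel₀ _ (mul_ne_zero h13 hα.ne') : X⁻¹ 0 2 * α * a = _)
    (mul_div_cancel₀ _ (mul_ne_zero h23 hβ.ne') : X⁻¹ 1 2 * β * b = _)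
  have hinj := exp_intCast_mul_injective hs
  refine ⟨testMatrix α β a b, pd3_testMatrix hα hβ a b, ?_, fun k hk hkk₀ => ?_⟩
  · rw [gam_zpow, ← sub_eq_zero, hdiff, sub_self, mul_zero, zero_pow two_ne_zero, zero_div]
  · rw [gam_zpow, ← sub_pos, hdiff]
    have hv : (exp (k * s) - 1) * (exp (k * s) - u) ≠ 0 :=
      mul_ne_zero (sub_ne_zero.2 fun h => hk (hinj (by simpa using h))) (sub_ne_zero.2 (hinj.ne hkk₀))
    positivity

/-- for `γ = diag(e^s, e^{-s}, 1)` with `s ≠ 0` and `X ∈ 𝒫(3)` whose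
inverse has nonzero `(1,3)` and `(2,3)` entries, for every nonzero integer `k₀` there
exists `A ∈ 𝒫(3)` whose Selberg invariant to the orbit `γᵏ.X` is minimized exactly at
`k ∈ {0, k₀}`; hence `DS(X, ⟨γ⟩)` is infinitely-sided. -/
theorem cyclic_type_three_prime_infinitely_sided
    (s : ℝ) (hs : s ≠ 0)
    (X : Matrix (Fin 3) (Fin 3) ℝ) (hX : PD3 X)
    (h13 : (X⁻¹) 0 2 ≠ 0) (h23 : (X⁻¹) 1 2 ≠ 0)
    (k₀ : ℤ) (hk₀ : k₀ ≠ 0) :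
    ∃ A : Matrix (Fin 3) (Fin 3) ℝ, PD3 A ∧
      sel (act (↑(gam s ^ k₀)) X) A = sel X A ∧
      ∀ k : ℤ, k ≠ 0 → k ≠ k₀ → sel X A < sel (act (↑(gam s ^ k)) X) A :=
  cyclic_type_three_prime_infinitely_sided_general s hs X hX h13 h23 k₀

end Stmt16
end

section
/- Let γ₁ be the 3×3 real matrix with rows (1,0,0), (0,1,1), (0,0,1) and γ₂ the 3×3 real matrix with rows (1,0,1), (0,1,0), (0,0,1); these are commuting unipotent elements of SL(3,ℝ). For every X ∈ 𝒫(3) and every pair of coprime integers (k₀, l₀) (i.e. gcd(k₀,l₀) = 1) there exists A ∈ 𝒫(3) such that s(γ₁^{k₀}γ₂^{l₀}.X, A) = s(X, A) and s(γ₁ᵏγ₂ˡ.X, A) > s(X, A) for every pair of integers (k,l) ∉ {(0,0), (k₀,l₀)}. (Hence the Dirichlet–Selberg domain of the group generated by γ₁ and γ₂ centered at any X ∈ 𝒫(3) is infinitely-sided.) -/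
open Matrix

namespace Stmt17

/-- Membership in `𝒫(3)`: symmetric positive definite of determinant 1. -/
def PD3 (X : Matrix (Fin 3) (Fin 3) ℝ) : Prop := X.PosDef ∧ X.det = 1

/-- Selberg's invariant `s(X,Y) = tr(X⁻¹·Y)`. -/
noncomputable def sel (X Y : Matrix (Fin 3) (Fin 3) ℝ) : ℝ := (X⁻¹ * Y).trace

/-- The action `g.X = gᵀ·X·g`. -/
def act (g X : Matrix (Fin 3) (Fin 3) ℝ) : Matrix (Fin 3) (Fin 3) ℝ := gᵀ * X * g

/-- `γ₁` with rows `(1,0,0), (0,1,1), (0,0,1)`, as a unit of the matrix ring. -/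
def gam₁ : (Matrix (Fin 3) (Fin 3) ℝ)ˣ :=
  ⟨!![1, 0, 0; 0, 1, 1; 0, 0, 1], !![1, 0, 0; 0, 1, -1; 0, 0, 1],
    by simp [Matrix.mul_fin_three, Matrix.one_fin_three],
    by simp [Matrix.mul_fin_three, Matrix.one_fin_three]⟩

/-- `γ₂` with rows `(1,0,1), (0,1,0), (0,0,1)`, as a unit of the matrix ring. -/
def gam₂ : (Matrix (Fin 3) (Fin 3) ℝ)ˣ :=
  ⟨!![1, 0, 1; 0, 1, 0; 0, 0, 1], !![1, 0, -1; 0, 1, 0; 0, 0, 1],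
    by simp [Matrix.mul_fin_three, Matrix.one_fin_three],
    by simp [Matrix.mul_fin_three, Matrix.one_fin_three]⟩

/-! For `g = γ₁ᵏγ₂ˡ`, the unipotent matrix with last column `(l, k, 1)`, one has
`s(g.X, A) = s(X, g⁻¹.A)`. For symmetric `A` with upper-left block `C`, the difference
`s(X, g⁻¹.A) - s(X, A)` is `(X⁻¹)₃₃ > 0` times a polynomial in `(l, k)` whose quadratic part is
the form of `C` and whose linear part can be prescribed freely through the last column of `A`;
the last diagonal entry then makes `A ∈ 𝒫(3)`.
With Bézout coefficients `a k₀ + b l₀ = 1`, the substitution `u = a k + b l`, `v = k₀ l - l₀ k`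
is unimodular, and `C` and the linear part are chosen so that the polynomial is `u² - u + v²`.
On `ℤ²` this vanishes exactly at `(u, v) = (0, 0), (1, 0)`, i.e. at `(k, l) = (0, 0), (k₀, l₀)`,
and is positive everywhere else. -/

def unip (x y : ℝ) : Matrix (Fin 3) (Fin 3) ℝ := !![1, 0, x; 0, 1, y; 0, 0, 1]

lemma unip_zero : unip 0 0 = 1 := by
  simp [unip, one_fin_three]

lemma unip_mul (x y x' y' : ℝ) : unip x y * unip x' y' = unip (x + x') (y + y') := by
  simp [unip, add_comm]

lemma unip_inv (x y : ℝ) : (unip x y)⁻¹ = unip (-x) (-y) :=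
  inv_eq_right_inv (by simp [unip_mul, unip_zero])

lemma coe_zpow_of_coe_eq_unip {u : (Matrix (Fin 3) (Fin 3) ℝ)ˣ} {x y : ℝ} (hu : ↑u = unip x y)
    (k : ℤ) : ↑(u ^ k) = unip (k * x) (k * y) := by
  induction k using Int.induction_on with
  | zero => simp [unip_zero]
  | succ n ih =>
    rw [_root_.zpow_add_one, Units.val_mul, ih, hu, unip_mul]
    congr 1 <;> push_cast <;> ring
  | pred n ih =>
    rw [_root_.zpow_sub_one, Units.val_mul, ih, coe_units_inv, hu, unip_inv, unip_mul]
    congr 1 <;> push_cast <;> ring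

lemma coe_gam₁_zpow_mul_gam₂_zpow (k l : ℤ) :
    ↑(gam₁ ^ k * gam₂ ^ l) = unip l k := by
  rw [Units.val_mul, coe_zpow_of_coe_eq_unip (x := 0) (y := 1) rfl,
    coe_zpow_of_coe_eq_unip (x := 1) (y := 0) rfl, unip_mul]
  simp

lemma sel_act (g X A : Matrix (Fin 3) (Fin 3) ℝ) : sel (act g X) A = sel X (act g⁻¹ A) := by
  simp only [sel, act, Matrix.mul_inv_rev, ← transpose_nonsing_inv, Matrix.mul_assoc]
  rw [trace_mul_comm, Matrix.mul_assoc, Matrix.mul_assoc]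

lemma PD3.act {X : Matrix (Fin 3) (Fin 3) ℝ} (hX : PD3 X) {g : Matrix (Fin 3) (Fin 3) ℝ}
    (hg : g.det = 1) : PD3 (act g X) := by
  refine ⟨?_, by simp [Stmt17.act, hX.2, hg]⟩
  have hinj : Function.Injective g.mulVec :=
    mulVec_injective_iff_isUnit.mpr (by simp [isUnit_iff_isUnit_det, hg])
  simpa [Stmt17.act] using hX.1.conjTranspose_mul_mul_same hinj

lemma PD3_diagonal {d : Fin 3 → ℝ} (hd : ∀ i, 0 < d i) (hdet : d 0 * d 1 * d 2 = 1) :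
    PD3 (diagonal d) :=
  ⟨posDef_diagonal_iff.mpr hd, by simp [det_diagonal, Fin.prod_univ_three, hdet]⟩

-- The symmetric matrix with upper-left block `C = [c₁₁ c₁₂; c₁₂ c₂₂]` and last column `(α, β)`
-- whose Schur complement `c₃₃ - (α, β) C⁻¹ (α, β)ᵀ` is `1`, for `det C = 1`.
def schurExtension (c₁₁ c₁₂ c₂₂ α β : ℝ) : Matrix (Fin 3) (Fin 3) ℝ :=
  !![c₁₁, c₁₂, α; c₁₂, c₂₂, β; α, β, c₂₂ * α ^ 2 - 2 * c₁₂ * α * β + c₁₁ * β ^ 2 + 1]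

lemma schurExtension_eq_act {c₁₁ c₁₂ c₂₂ : ℝ} (h₁₁ : 0 < c₁₁) (hdet : c₁₁ * c₂₂ - c₁₂ ^ 2 = 1)
    (α β : ℝ) :
    schurExtension c₁₁ c₁₂ c₂₂ α β =
      act !![1, c₁₂ / c₁₁, α / c₁₁; 0, 1, c₁₁ * β - c₁₂ * α; 0, 0, 1]
        (diagonal ![c₁₁, c₁₁⁻¹, 1]) := by
  have hc₂₂ : c₂₂ = (1 + c₁₂ ^ 2) / c₁₁ := by field_simp; linarith
  subst hc₂₂
  ext i j
  fin_cases i <;> fin_cases j <;>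
    simp [schurExtension, act, mul_apply, Fin.sum_univ_three, diagonal] <;> field_simp <;> ring

lemma PD3_schurExtension {c₁₁ c₁₂ c₂₂ : ℝ} (h₁₁ : 0 < c₁₁) (hdet : c₁₁ * c₂₂ - c₁₂ ^ 2 = 1)
    (α β : ℝ) : PD3 (schurExtension c₁₁ c₁₂ c₂₂ α β) := by
  rw [schurExtension_eq_act h₁₁ hdet]
  refine (PD3_diagonal ?_ ?_).act ?_
  · intro i; fin_cases i <;> simp [h₁₁]
  · simp [h₁₁.ne']
  · simp [det_fin_three]

lemma trace_mul_act_unip {A B : Matrix (Fin 3) (Fin 3) ℝ} (hA : A.IsSymm) (hB : B.IsSymm)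
    (x y : ℝ) :
    (B * act (unip x y) A).trace = (B * A).trace
      + B 2 2 * (A 0 0 * x ^ 2 + 2 * A 0 1 * x * y + A 1 1 * y ^ 2)
      + 2 * (x * (B 0 2 * A 0 0 + B 1 2 * A 0 1 + B 2 2 * A 0 2)
        + y * (B 0 2 * A 0 1 + B 1 2 * A 1 1 + B 2 2 * A 1 2)) := by
  simp only [act, unip, trace, diag, mul_apply, Fin.sum_univ_three, transpose_apply]
  simp [hA.apply 0 1, hA.apply 0 2, hA.apply 1 2, hB.apply 0 1, hB.apply 0 2, hB.apply 1 2]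
  ring

lemma exists_PD3_sel_act_unip {X : Matrix (Fin 3) (Fin 3) ℝ} (hX : X.PosDef)
    {c₁₁ c₁₂ c₂₂ : ℝ} (h₁₁ : 0 < c₁₁) (hdet : c₁₁ * c₂₂ - c₁₂ ^ 2 = 1) (p₁ p₂ : ℝ) :
    ∃ A, PD3 A ∧ ∀ x y : ℝ, sel (act (unip x y) X) A =
      sel X A + X⁻¹ 2 2 * (c₁₁ * x ^ 2 + 2 * c₁₂ * x * y + c₂₂ * y ^ 2 - (p₁ * x + p₂ * y)) := by
  have hB₂₂ : 0 < X⁻¹ 2 2 := hX.inv.diag_pos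
  obtain ⟨α, hα⟩ : ∃ α, X⁻¹ 0 2 * c₁₁ + X⁻¹ 1 2 * c₁₂ + X⁻¹ 2 2 * α = X⁻¹ 2 2 * p₁ / 2 :=
    ⟨p₁ / 2 - (X⁻¹ 0 2 * c₁₁ + X⁻¹ 1 2 * c₁₂) / X⁻¹ 2 2, by field_simp; ring⟩
  obtain ⟨β, hβ⟩ : ∃ β, X⁻¹ 0 2 * c₁₂ + X⁻¹ 1 2 * c₂₂ + X⁻¹ 2 2 * β = X⁻¹ 2 2 * p₂ / 2 :=
    ⟨p₂ / 2 - (X⁻¹ 0 2 * c₁₂ + X⁻¹ 1 2 * c₂₂) / X⁻¹ 2 2, by field_simp; ring⟩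
  have hA := PD3_schurExtension h₁₁ hdet α β
  refine ⟨_, hA, fun x y => ?_⟩
  rw [sel_act, unip_inv, sel, sel, trace_mul_act_unip (isHermitian_iff_isSymm.mp hA.1.isHermitian)
    (isHermitian_iff_isSymm.mp hX.inv.isHermitian)]
  simp only [schurExtension, of_apply, cons_val', cons_val_zero, cons_val_one, cons_val_two,
    empty_val', cons_val_fin_one, head_cons, tail_cons]
  linear_combination (-2 * x) * hα + (-2 * y) * hβ

lemma Int.sq_sub_self_add_sq_pos {u v : ℤ} (h₀ : ¬(u = 0 ∧ v = 0)) (h₁ : ¬(u = 1 ∧ v = 0)) :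
    0 < u ^ 2 - u + v ^ 2 := by
  have hu : 0 ≤ u ^ 2 - u := by nlinarith [sq_nonneg (2 * u - 1)]
  rcases eq_or_ne v 0 with rfl | hv
  · have : u ≤ -1 ∨ 2 ≤ u := by omega
    rcases this with h | h <;> nlinarith
  · have := pow_pos (abs_pos.mpr hv) 2
    nlinarith [sq_abs v]

lemma Int.eq_mul_of_bezout {a b k₀ l₀ k l : ℤ} (hab : a * k₀ + b * l₀ = 1)
    (hv : k₀ * l - l₀ * k = 0) : k = (a * k + b * l) * k₀ ∧ l = (a * k + b * l) * l₀ :=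
  ⟨by linear_combination (-k) * hab - b * hv, by linear_combination (-l) * hab + a * hv⟩

/-- for every `X ∈ 𝒫(3)` and every coprime pair of integers `(k₀, l₀)`
there exists `A ∈ 𝒫(3)` whose Selberg invariant on the orbit `γ₁ᵏγ₂ˡ.X` is minimized
exactly at `(k,l) ∈ {(0,0), (k₀,l₀)}`; hence `DS(X, ⟨γ₁,γ₂⟩)` is infinitely-sided. -/
theorem two_generated_type_one_prime_infinitely_sided
    (X : Matrix (Fin 3) (Fin 3) ℝ) (hX : PD3 X)
    (k₀ l₀ : ℤ) (hcop : Int.gcd k₀ l₀ = 1) :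
    ∃ A : Matrix (Fin 3) (Fin 3) ℝ, PD3 A ∧
      sel (act (↑(gam₁ ^ k₀ * gam₂ ^ l₀)) X) A = sel X A ∧
      ∀ k l : ℤ, ¬(k = 0 ∧ l = 0) → ¬(k = k₀ ∧ l = l₀) →
        sel X A < sel (act (↑(gam₁ ^ k * gam₂ ^ l)) X) A := by
  obtain ⟨a, b, hab⟩ := Int.isCoprime_iff_gcd_eq_one.mpr hcop
  have hdet : ((b : ℝ) ^ 2 + k₀ ^ 2) * (a ^ 2 + l₀ ^ 2) - (a * b - k₀ * l₀) ^ 2 = 1 := by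
    have habR : (a : ℝ) * k₀ + b * l₀ = 1 := by exact_mod_cast hab
    linear_combination (a * k₀ + b * l₀ + 1 : ℝ) * habR
  have h₁₁ : (0 : ℝ) < b ^ 2 + k₀ ^ 2 :=
    (by positivity : (0 : ℝ) ≤ _).lt_of_ne fun h => by rw [← h] at hdet; nlinarith
  obtain ⟨A, hA, hsel⟩ := exists_PD3_sel_act_unip hX.1 h₁₁ hdet b a
  have hsel' (k l : ℤ) : sel (act ↑(gam₁ ^ k * gam₂ ^ l) X) A = sel X A +
      X⁻¹ 2 2 * ((((a * k + b * l) ^ 2 - (a * k + b * l) + (k₀ * l - l₀ * k) ^ 2 : ℤ)) : ℝ) := by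
    rw [coe_gam₁_zpow_mul_gam₂_zpow, hsel]
    push_cast
    ring
  refine ⟨A, hA, by rw [hsel', hab, mul_comm l₀]; simp, fun k l h₀ h₁ => ?_⟩
  have hpos := Int.sq_sub_self_add_sq_pos (u := a * k + b * l) (v := k₀ * l - l₀ * k)
    (fun ⟨hu, hv⟩ => h₀ (by simpa [hu] using Int.eq_mul_of_bezout hab hv))
    (fun ⟨hu, hv⟩ => h₁ (by simpa [hu] using Int.eq_mul_of_bezout hab hv))
  rw [hsel']
  exact lt_add_of_pos_right _ (mul_pos hX.1.inv.diag_pos (by exact_mod_cast hpos))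

end Stmt17
end

section
/- Let H₃(ℤ) denote the integer Heisenberg group, i.e. the group of 3×3 upper unitriangular matrices with integer entries, regarded as a discrete subgroup of SL(3,ℝ). Let X ∈ 𝒫(3) satisfy (X⁻¹)₂₃ = 0. Then the set of elements γ ∈ H₃(ℤ) for which there exists A ∈ 𝒫(3) with s(γ.X, A) = s(X, A) and s(γ'.X, A) > s(X, A) for every γ' ∈ H₃(ℤ) ∖ {1, γ} is infinite. (Hence the Dirichlet–Selberg domain DS(X, H₃(ℤ)) is infinitely-sided.) -/
open Matrix

namespace Stmt19

/-- Membership in `𝒫(3)`: symmetric positive definite of determinant 1. -/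
def PD3 (X : Matrix (Fin 3) (Fin 3) ℝ) : Prop := X.PosDef ∧ X.det = 1

/-- Selberg's invariant `s(X,Y) = tr(X⁻¹·Y)`. -/
noncomputable def sel (X Y : Matrix (Fin 3) (Fin 3) ℝ) : ℝ := (X⁻¹ * Y).trace

/-- The action `g.X = gᵀ·X·g`. -/
def act (g X : Matrix (Fin 3) (Fin 3) ℝ) : Matrix (Fin 3) (Fin 3) ℝ := gᵀ * X * g

/-- Membership in the integer Heisenberg group `H₃(ℤ) < SL(3,ℝ)`: upper unitriangular
matrices with integer entries. -/
def Heis (γ : Matrix (Fin 3) (Fin 3) ℝ) : Prop :=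
  ∃ a b c : ℤ, γ = !![1, (a : ℝ), (b : ℝ); 0, 1, (c : ℝ); 0, 0, 1]

/-!
Write `S = X⁻¹` (entries indexed from 0, so the hypothesis is `S₁₂ = 0`), `t = S₁₁`, `w = S₂₂`;
then `s(γ.X, A) = tr(γ⁻¹ S γ⁻ᵀ A)`. Test against `A = hᵀ diag(1, ε, 1) h` with
`h = heis(-ν, -S₀₂/S₂₂, N/2)`: since `S₁₂ = 0`, for `γ = heis(a, b, c)`
  `s(γ.X, A) - s(X, A) = t a² - 2 (S₀₁ - ν t) a + w ((b - a c - ν c)² + ε c (c - N))`.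
Take `n` prime, `N = n`, `ε = n⁻⁶` and `ν = P/n` with `P` prime to `n` and `|S₀₁ - ν t| < t/2`.
On integers the `a`-part is positive unless `a = 0`. The `(b, c)`-part vanishes at `(0, 0)` and
`(P, n)` only: for `c ∉ [0, n]` the `ε`-term is positive, and for `c ∈ [0, n]` coprimality makes
`b - P c / n` a nonzero multiple of `1/n` (except at those two points), which outweighs
`ε c (n - c) ≤ 1/(4n²)`. Rescaling `A` by `n²` gives `det A = 1`, so `heis(0, P, n)` is a facet
for every prime `n ≥ 3`.
-/

def heis (a b c : ℝ) : Matrix (Fin 3) (Fin 3) ℝ := !![1, a, b; 0, 1, c; 0, 0, 1]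

lemma heis_iff {γ : Matrix (Fin 3) (Fin 3) ℝ} : Heis γ ↔ ∃ a b c : ℤ, γ = heis a b c :=
  Iff.rfl

lemma heis_zero : heis 0 0 0 = 1 := by
  rw [heis, one_fin_three]

lemma heis_mul_heis (a b c a' b' c' : ℝ) :
    heis a b c * heis a' b' c' = heis (a + a') (b + a * c' + b') (c + c') := by
  simp [heis, add_comm]

lemma inv_heis (a b c : ℝ) : (heis a b c)⁻¹ = heis (-a) (a * c - b) (-c) := by
  refine inv_eq_left_inv ?_
  rw [heis_mul_heis, ← heis_zero]
  congr 1 <;> ring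

lemma det_heis (a b c : ℝ) : (heis a b c).det = 1 := by
  simp [heis, det_fin_three]

lemma inv_act (g X : Matrix (Fin 3) (Fin 3) ℝ) :
    (act g X)⁻¹ = g⁻¹ * X⁻¹ * g⁻¹ᵀ := by
  rw [act, Matrix.mul_inv_rev, Matrix.mul_inv_rev, transpose_nonsing_inv, mul_assoc]

lemma det_act (g X : Matrix (Fin 3) (Fin 3) ℝ) : (act g X).det = g.det ^ 2 * X.det := by
  rw [act, det_mul, det_mul, det_transpose]
  ring

lemma posDef_act {g X : Matrix (Fin 3) (Fin 3) ℝ} (hX : X.PosDef) (hg : IsUnit g.det) :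
    (act g X).PosDef := by
  have hinj : Function.Injective g.mulVec :=
    mulVec_injective_iff_isUnit.2 ((isUnit_iff_isUnit_det g).2 hg)
  simpa [act] using hX.conjTranspose_mul_mul_same hinj

lemma sel_smul (X A : Matrix (Fin 3) (Fin 3) ℝ) (k : ℝ) : sel X (k • A) = k * sel X A := by
  rw [sel, Matrix.mul_smul, trace_smul, smul_eq_mul, sel]

lemma eq_of_isSymm_of_apply_one_two {α : Type*} [Zero α] {M : Matrix (Fin 3) (Fin 3) α}
    (hM : M.IsSymm) (h12 : M 1 2 = 0) :
    M = !![M 0 0, M 0 1, M 0 2; M 0 1, M 1 1, 0; M 0 2, 0, M 2 2] := by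
  ext i j
  fin_cases i <;> fin_cases j <;> simp [h12, hM.apply 0 1, hM.apply 0 2, hM.apply 1 2]

lemma sel_act_heis_sub_sel {X : Matrix (Fin 3) (Fin 3) ℝ} {p q t w ρ : ℝ}
    (hX : X⁻¹ = !![p, q, ρ * w; q, t, 0; ρ * w, 0, w]) (ν ε N a b c : ℝ) :
    sel (act (heis a b c) X) (act (heis (-ν) (-ρ) (N / 2)) (diagonal ![1, ε, 1]))
        - sel X (act (heis (-ν) (-ρ) (N / 2)) (diagonal ![1, ε, 1])) =
      t * a ^ 2 - 2 * (q - ν * t) * a + w * ((b - a * c - ν * c) ^ 2 + ε * c * (c - N)) := by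
  rw [sel, sel, inv_act, inv_heis, hX]
  simp only [act, heis, diagonal_vec3, trace_fin_three, mul_apply, Fin.sum_univ_three,
    transpose_apply, of_apply, cons_val', cons_val_zero, cons_val_one, cons_val, cons_val_fin_one]
  ring

lemma int_quadratic_pos {t s : ℝ} (hs : |s| < t / 2) {a : ℤ} (ha : a ≠ 0) :
    0 < t * a ^ 2 - 2 * s * a := by
  have ha1 : (1 : ℝ) ≤ |(a : ℝ)| := by exact_mod_cast Int.one_le_abs ha
  have ht : 0 < t := by linarith [abs_nonneg s]
  rw [sub_pos]
  calc 2 * s * a ≤ 2 * (|s| * |(a : ℝ)|) := by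
        rw [mul_assoc, ← abs_mul]; gcongr; exact le_abs_self _
    _ < t * |(a : ℝ)| := by nlinarith
    _ ≤ t * |(a : ℝ)| ^ 2 := by gcongr; nlinarith
    _ = t * a ^ 2 := by rw [sq_abs]

lemma lattice_gap_pos {P : ℤ} {n : ℕ} (hP : IsCoprime P n) (hn : 0 < n) {ε : ℝ}
    (hε : 0 < ε) (hεn : ε * n ^ 4 ≤ 1) {b c : ℤ} (h0 : (b, c) ≠ (0, 0))
    (hPn : (b, c) ≠ (P, (n : ℤ))) :
    0 < (b - P / n * c) ^ 2 + ε * c * (c - n) := by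
  by_cases hout : c < 0 ∨ (n : ℤ) < c
  · have hpos : (0 : ℤ) < c * (c - n) := by rcases hout with h | h <;> nlinarith
    have : (0 : ℝ) < c * (c - n) := by exact_mod_cast hpos
    nlinarith [sq_nonneg ((b : ℝ) - P / n * c), mul_pos hε this]
  obtain ⟨hc, hcn⟩ : 0 ≤ c ∧ c ≤ n := by simpa only [not_or, not_lt] using hout
  have hk : (n : ℤ) * b - P * c ≠ 0 := by
    intro hk
    have hdvd : (n : ℤ) ∣ c := hP.symm.dvd_of_dvd_mul_left ⟨b, by linarith⟩
    rcases hcn.eq_or_lt with rfl | hcn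
    · have : b = P :=
        mul_left_cancel₀ (by exact_mod_cast hn.ne') (by linarith : (n : ℤ) * b = n * P)
      exact hPn (by rw [this])
    · obtain rfl := Int.eq_zero_of_dvd_of_nonneg_of_lt hc hcn hdvd
      exact h0 (by simpa [hn.ne'] using hk)
  have hsq : 1 / (n : ℝ) ^ 2 ≤ (b - P / n * c) ^ 2 := by
    have hk1 : (1 : ℝ) ≤ ((n * b - P * c : ℤ) : ℝ) ^ 2 := by
      rw [one_le_sq_iff_one_le_abs]; exact_mod_cast Int.one_le_abs hk
    have hnR : (0 : ℝ) < n := by exact_mod_cast hn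
    rw [show (b : ℝ) - P / n * c = ((n * b - P * c : ℤ) : ℝ) / n by push_cast; field_simp,
      div_pow]
    gcongr
  have hcR : (0 : ℝ) ≤ c := by exact_mod_cast hc
  have hcnR : (c : ℝ) ≤ n := by exact_mod_cast hcn
  have hmid : c * (n - c) ≤ (n : ℝ) ^ 2 / 4 := by nlinarith [sq_nonneg ((c : ℝ) - n / 2)]
  have : ε * c * (n - c) < 1 / (n : ℝ) ^ 2 := by
    rw [lt_div_iff₀ (by positivity)]
    nlinarith [mul_le_mul_of_nonneg_left hmid hε.le, mul_nonneg hcR (sub_nonneg.2 hcnR)]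
  nlinarith

lemma lattice_gap_nonneg {P : ℤ} {n : ℕ} (hP : IsCoprime P n) (hn : 0 < n) {ε : ℝ}
    (hε : 0 < ε) (hεn : ε * n ^ 4 ≤ 1) (b c : ℤ) :
    0 ≤ (b - P / n * c) ^ 2 + ε * c * (c - n) := by
  by_cases h0 : (b, c) = (0, 0)
  · simp_all
  by_cases hPn : (b, c) = (P, (n : ℤ))
  · simp only [Prod.mk.injEq] at hPn
    have hnR : (n : ℝ) ≠ 0 := by exact_mod_cast hn.ne'
    simp [hPn, hnR]
  exact (lattice_gap_pos hP hn hε hεn h0 hPn).le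

lemma exists_isCoprime_abs_sub_lt {n : ℕ} (hn : n.Prime) (h3 : 3 ≤ n) {t : ℝ} (ht : 0 < t)
    (q : ℝ) : ∃ P : ℤ, IsCoprime P n ∧ |q - P / n * t| < t / 2 := by
  have hnZ : Prime (n : ℤ) := Nat.prime_iff_prime_int.mp hn
  have hfloor : ∃ P : ℤ, ¬ (n : ℤ) ∣ P ∧ |n * (q / t) - P| ≤ 1 := by
    have h1 := Int.floor_le ((n : ℝ) * (q / t))
    have h2 := Int.lt_floor_add_one ((n : ℝ) * (q / t))
    by_cases h : (n : ℤ) ∣ ⌊(n : ℝ) * (q / t)⌋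
    · refine ⟨_ + 1, fun h' => hnZ.not_dvd_one ((Int.dvd_add_right h).1 h'), ?_⟩
      rw [abs_le]; push_cast; constructor <;> linarith
    · exact ⟨_, h, by rw [abs_le]; constructor <;> linarith⟩
  obtain ⟨P, hPn, hP⟩ := hfloor
  refine ⟨P, ((hnZ.coprime_iff_not_dvd).2 hPn).symm, ?_⟩
  have hnR : (3 : ℝ) ≤ n := by exact_mod_cast h3
  calc |q - P / n * t| = t / n * |n * (q / t) - P| := by
        rw [← abs_of_pos (by positivity : 0 < t / n), ← abs_mul]
        congr 1; field_simp
    _ ≤ t / n := mul_le_of_le_one_right (by positivity) hP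
    _ < t / 2 := div_lt_div_of_pos_left ht (by norm_num) (by linarith)

/-- Some `A ∈ 𝒫(3)` lies in the relative interior of the face of the Dirichlet–Selberg domain
`DS(X, H₃(ℤ))` on the bisector of `X` and `γ.X`, so this face is a facet. -/
def IsFacet (X γ : Matrix (Fin 3) (Fin 3) ℝ) : Prop :=
  ∃ A : Matrix (Fin 3) (Fin 3) ℝ, PD3 A ∧ sel (act γ X) A = sel X A ∧
    ∀ γ' : Matrix (Fin 3) (Fin 3) ℝ, Heis γ' → γ' ≠ 1 → γ' ≠ γ →
      sel X A < sel (act γ' X) A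

lemma isFacet_heis {X : Matrix (Fin 3) (Fin 3) ℝ} (hX : PD3 X) (h12 : X⁻¹ 1 2 = 0) {n : ℕ}
    (hn : 0 < n) {P : ℤ} (hP : IsCoprime P n)
    (happrox : |X⁻¹ 0 1 - P / n * X⁻¹ 1 1| < X⁻¹ 1 1 / 2) :
    IsFacet X (heis 0 P n) := by
  have hS : X⁻¹.PosDef := hX.1.inv
  have hw : 0 < X⁻¹ 2 2 := hS.diag_pos
  have hnR : (0 : ℝ) < n := by exact_mod_cast hn
  set ρ := X⁻¹ 0 2 / X⁻¹ 2 2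
  have hshape : X⁻¹ = !![X⁻¹ 0 0, X⁻¹ 0 1, ρ * X⁻¹ 2 2; X⁻¹ 0 1, X⁻¹ 1 1, 0;
      ρ * X⁻¹ 2 2, 0, X⁻¹ 2 2] := by
    rw [div_mul_cancel₀ _ hw.ne']
    exact eq_of_isSymm_of_apply_one_two hS.isHermitian h12
  set ε : ℝ := 1 / n ^ 6 with hε
  have hε0 : 0 < ε := by positivity
  have hεn : ε * n ^ 4 ≤ 1 := by
    rw [hε, div_mul_eq_mul_div, one_mul, div_le_one (by positivity)]
    exact pow_le_pow_right₀ (by exact_mod_cast hn) (by norm_num)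
  have hgap := sel_act_heis_sub_sel hshape (P / n) ε n
  set A₀ := act (heis (-(P / n)) (-ρ) (n / 2)) (diagonal ![1, ε, 1])
  refine ⟨(n ^ 2 : ℝ) • A₀, ⟨?_, ?_⟩, ?_, ?_⟩
  · refine (posDef_act (PosDef.diagonal fun i => ?_) (by simp [det_heis])).smul (by positivity)
    fin_cases i <;> simp [hε0]
  · rw [det_smul, det_act, det_heis, det_diagonal, Fin.prod_univ_three]
    simp only [Fintype.card_fin, hε, cons_val_zero, cons_val_one, cons_val]
    field_simp
  · rw [sel_smul, sel_smul, ← sub_eq_zero, ← mul_sub, hgap]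
    simp [hnR.ne']
  · rintro γ' hγ' h1 h2
    obtain ⟨a, b, c, rfl⟩ := heis_iff.1 hγ'
    rw [sel_smul, sel_smul, ← sub_pos, ← mul_sub, hgap]
    refine mul_pos (by positivity) ?_
    rcases eq_or_ne a 0 with rfl | ha
    · have h0 : (b, c) ≠ (0, 0) := by rintro ⟨⟩; exact h1 (by simpa using heis_zero)
      have hPn : (b, c) ≠ (P, (n : ℤ)) := by rintro ⟨⟩; exact h2 (by simp)
      simpa using mul_pos hw (lattice_gap_pos hP hn hε0 hεn h0 hPn)
    · refine add_pos_of_pos_of_nonneg (int_quadratic_pos happrox ha) (mul_nonneg hw.le ?_)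
      simpa using lattice_gap_nonneg hP hn hε0 hεn (b - a * c) c

/-- for `X ∈ 𝒫(3)` with `(X⁻¹)₂₃ = 0`, infinitely many elements
`γ ∈ H₃(ℤ)` contribute a facet to the Dirichlet–Selberg domain `DS(X, H₃(ℤ))`:
there is `A ∈ 𝒫(3)` whose Selberg invariant over the orbit is minimized exactly at the
identity and at `γ`. Hence `DS(X, H₃(ℤ))` is infinitely-sided. -/
theorem heisenberg_infinitely_sided
    (X : Matrix (Fin 3) (Fin 3) ℝ) (hX : PD3 X) (h23 : (X⁻¹) 1 2 = 0) :
    {γ : Matrix (Fin 3) (Fin 3) ℝ | Heis γ ∧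
      ∃ A : Matrix (Fin 3) (Fin 3) ℝ, PD3 A ∧
        sel (act γ X) A = sel X A ∧
        ∀ γ' : Matrix (Fin 3) (Fin 3) ℝ, Heis γ' → γ' ≠ 1 → γ' ≠ γ →
          sel X A < sel (act γ' X) A}.Infinite := by
  refine Set.Infinite.of_image (fun γ => γ 1 2) (Set.infinite_of_forall_exists_gt fun M => ?_)
  obtain ⟨n, hMn, hn⟩ := Nat.exists_infinite_primes (max 3 (⌈M⌉₊ + 1))
  obtain ⟨P, hP, happrox⟩ :=
    exists_isCoprime_abs_sub_lt hn (le_of_max_le_left hMn) hX.1.inv.diag_pos (X⁻¹ 0 1)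
  refine ⟨n, ⟨heis 0 P n, ⟨⟨0, P, n, by simp [heis]⟩,
    isFacet_heis hX h23 hn.pos hP happrox⟩, by simp [heis]⟩, ?_⟩
  calc M ≤ ⌈M⌉₊ := Nat.le_ceil M
    _ < n := by exact_mod_cast (le_of_max_le_right hMn)

end Stmt19
end
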